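/- arXiv:1912.03228 — 13 statements merged into one kernel-verified Lean document; each statement's English description precedes it below -/
import Mathlib

section
/- Let N be a finite-dimensional complex vector space, M ⊂ N a hyperplane, and L ⊂ N a line with N = M ⊕ L. Let {M_i}_{i∈I} and {M'_i}_{i∈I} be two collections of subspaces of M indexed by a set I, and let I₀ ⊂ I. If there exists g ∈ GL(N) such that g(M_i) = M'_i for all i ∈ I₀ and g(M_i ⊕ L) = M'_i ⊕ L for all i ∈ I \ I₀, then there exists h ∈ GL(M) with h(M_i) = M'_i for all i ∈ I. -/
/-!
If `g(M) ∩ L = 0`, let `π : N → M` be the projection along `L`. Then `h = π ∘ g|_M` is injective,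
hence invertible; since `π` undoes the inclusion of `M` and kills `L`, `h(M_i) = M'_i` for
`i ∈ I₀`, and `h(M_i) ⊆ M'_i` otherwise, with equality by counting dimensions.
In general, let `W` be the span of the `M_i` with `i ∈ I₀` and `L = ⟨e⟩`. Then `w = g⁻¹(e) ∉ W`
because `g(W) ⊆ M`, and a transvection `t = id + φ ⊗ e` with `φ` vanishing on `W + L` and
`φ(w) ≠ 0` fixes `W` pointwise, preserves every subspace containing `L`, and moves `w` out of `M`.
So `g ∘ t` satisfies the same hypotheses as `g`, and moreover `(g ∘ t)(M) ∩ L = 0`.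
-/

open Submodule

theorem map_eq_self_of_forall_mem_apply_eq {R V : Type*} [Semiring R] [AddCommMonoid V]
    [Module R V] {f : V →ₗ[R] V} {S : Submodule R V} (hf : ∀ x ∈ S, f x = x) : S.map f = S :=
  SetLike.coe_injective <| by rw [map_coe, Set.image_congr hf, Set.image_id']

theorem map_eq_self_of_forall_apply_sub_mem {R V : Type*} [Ring R] [AddCommGroup V] [Module R V]
    {t : V ≃ₗ[R] V} {L S : Submodule R V} (ht : ∀ x, t x - x ∈ L) (hLS : L ≤ S) :
    S.map (t : V →ₗ[R] V) = S := by
  have key : ∀ x, t x ∈ S ↔ x ∈ S := fun x => by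
    rw [← sub_add_cancel (t x) x]
    exact S.add_mem_iff_right (hLS (ht x))
  ext y
  rw [mem_map_equiv, ← key, t.apply_symm_apply]

section

variable {K N : Type*} [Field K] [AddCommGroup N] [Module K N]

section Compression

open Module Function

variable {M L : Submodule K N} (hML : IsCompl M L)

theorem map_projectionOnto_map_subtype (S : Submodule K M) :
    (S.map M.subtype).map (M.projectionOnto L hML) = S := by
  rw [← map_comp, projectionOnto_comp_subtype, map_id]

theorem map_projectionOnto_map_subtype_sup (S : Submodule K M) :
    (S.map M.subtype ⊔ L).map (M.projectionOnto L hML) = S := by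
  have hL : L.map (M.projectionOnto L hML) = ⊥ :=
    LinearMap.le_ker_iff_map.mp (ker_projectionOnto hML).ge
  rw [Submodule.map_sup, map_projectionOnto_map_subtype, hL, sup_bot_eq]

theorem finrank_map_subtype_sup_of_disjoint [FiniteDimensional K N] (hdisj : Disjoint M L)
    (S : Submodule K M) :
    finrank K ↥(S.map M.subtype ⊔ L) = finrank K S + finrank K L := by
  have h := finrank_sup_add_finrank_inf_eq (S.map M.subtype) L
  rwa [(hdisj.mono_left (map_subtype_le M S)).eq_bot, finrank_bot, add_zero,
    finrank_map_subtype_eq] at h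

variable (g : N ≃ₗ[K] N)

theorem injective_projectionOnto_comp_of_disjoint (hg : Disjoint (M.map (g : N →ₗ[K] N)) L) :
    Injective (M.projectionOnto L hML ∘ₗ g.toLinearMap ∘ₗ M.subtype) := by
  rw [← LinearMap.ker_eq_bot, eq_bot_iff]
  intro x hx
  have hgx : g x ∈ L := by
    rw [← ker_projectionOnto hML]
    exact hx
  have : g x = 0 := disjoint_def.mp hg _ (mem_map_of_mem x.2) hgx
  simpa using this

theorem map_projectionOnto_comp_of_map_eq {S S' : Submodule K M}
    (h : (S.map M.subtype).map (g : N →ₗ[K] N) = S'.map M.subtype) :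
    S.map (M.projectionOnto L hML ∘ₗ g.toLinearMap ∘ₗ M.subtype) = S' := by
  rw [map_comp, map_comp, h, map_projectionOnto_map_subtype]

theorem map_projectionOnto_comp_of_map_sup_eq [FiniteDimensional K N]
    (hg : Disjoint (M.map (g : N →ₗ[K] N)) L) {S S' : Submodule K M}
    (h : (S.map M.subtype ⊔ L).map (g : N →ₗ[K] N) = S'.map M.subtype ⊔ L) :
    S.map (M.projectionOnto L hML ∘ₗ g.toLinearMap ∘ₗ M.subtype) = S' := by
  refine eq_of_le_of_finrank_eq ?_ ?_
  · rw [map_comp, map_comp, ← map_projectionOnto_map_subtype_sup hML S', ← h]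
    exact map_mono (map_mono le_sup_left)
  · have hS := g.finrank_map_eq (S.map M.subtype ⊔ L)
    rw [h, finrank_map_subtype_sup_of_disjoint hML.disjoint,
      finrank_map_subtype_sup_of_disjoint hML.disjoint, Nat.add_right_cancel_iff] at hS
    have hinj := injective_projectionOnto_comp_of_disjoint hML g hg
    rw [← (equivMapOfInjective _ hinj S).finrank_eq, hS]

end Compression

theorem exists_linearEquiv_map_eq_of_disjoint [FiniteDimensional K N] {M L : Submodule K N}
    (hML : IsCompl M L) (g : N ≃ₗ[K] N) (hg : Disjoint (M.map (g : N →ₗ[K] N)) L)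
    {I : Type*} (I₀ : Set I) (Mi Mi' : I → Submodule K M)
    (hg₀ : ∀ i ∈ I₀, ((Mi i).map M.subtype).map (g : N →ₗ[K] N) = (Mi' i).map M.subtype)
    (hg₁ : ∀ i ∉ I₀,
      ((Mi i).map M.subtype ⊔ L).map (g : N →ₗ[K] N) = (Mi' i).map M.subtype ⊔ L) :
    ∃ h : M ≃ₗ[K] M, ∀ i, (Mi i).map (h : M →ₗ[K] M) = Mi' i := by
  refine ⟨.ofInjectiveEndo _ (injective_projectionOnto_comp_of_disjoint hML g hg), fun i => ?_⟩
  by_cases hi : i ∈ I₀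
  · exact map_projectionOnto_comp_of_map_eq hML g (hg₀ i hi)
  · exact map_projectionOnto_comp_of_map_sup_eq hML g hg (hg₁ i hi)

theorem exists_linearEquiv_fixing_symm_apply_notMem {M W : Submodule K N} (hWM : W ≤ M)
    {e w : N} (he : e ∉ M) (hw : w ∉ W) :
    ∃ t : N ≃ₗ[K] N, (∀ x ∈ W, t x = x) ∧ (∀ x, t x - x ∈ K ∙ e) ∧ t.symm w ∉ M := by
  by_cases hwM : w ∈ M
  swap
  · exact ⟨.refl K N, fun _ _ => rfl, fun x => by simp, hwM⟩
  have he0 : e ≠ 0 := fun h => he (h ▸ M.zero_mem)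
  have hWeM : (W ⊔ K ∙ e) ⊓ M = W := by
    rw [sup_inf_assoc_of_le _ hWM, ((disjoint_span_singleton' he0).mpr he).symm.eq_bot,
      sup_bot_eq]
  have hwWe : w ∉ W ⊔ K ∙ e := fun h => hw (hWeM ▸ mem_inf.mpr ⟨h, hwM⟩)
  obtain ⟨φ, hφw, hφ⟩ := exists_dual_map_eq_bot_of_notMem hwWe inferInstance
  have hφ' : ∀ x ∈ W ⊔ K ∙ e, φ x = 0 := fun x hx => LinearMap.le_ker_iff_map.mpr hφ hx
  have hφe : φ e = 0 := hφ' e (mem_sup_right (mem_span_singleton_self e))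
  have hφe' : φ (-e) = 0 := by rw [map_neg, hφe, neg_zero]
  refine ⟨.transvection hφe, fun x hx => ?_, fun x => ?_, ?_⟩
  · rw [LinearEquiv.transvection.apply, hφ' x (mem_sup_left hx), zero_smul, add_zero]
  · rw [LinearEquiv.transvection.apply, add_sub_cancel_left]
    exact smul_mem _ (φ x) (mem_span_singleton_self e)
  · rw [LinearEquiv.transvection.symm_eq hφe hφe', LinearEquiv.transvection.apply, smul_neg,
      ← sub_eq_add_neg, M.sub_mem_iff_right hwM]
    exact fun h => he ((M.smul_mem_iff hφw).mp h)

end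

/-- If `N` is a finite-dimensional complex vector space, `M ⊂ N` a hyperplane,
`L ⊂ N` a line with `N = M ⊕ L`, and `{M_i}`, `{M'_i}` are collections of subspaces of `M`
such that some `g ∈ GL(N)` satisfies `g(M_i) = M'_i` for `i ∈ I₀` and
`g(M_i ⊕ L) = M'_i ⊕ L` for `i ∉ I₀`, then some `h ∈ GL(M)` satisfies `h(M_i) = M'_i` for all `i`. -/
theorem stmt0 {N : Type*} [AddCommGroup N] [Module ℂ N] [FiniteDimensional ℂ N]
    (M L : Submodule ℂ N) (hcompl : IsCompl M L) (hL : Module.finrank ℂ L = 1)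
    {I : Type*} (I₀ : Set I) (Mi Mi' : I → Submodule ℂ ↥M)
    (hg : ∃ g : N ≃ₗ[ℂ] N,
      (∀ i ∈ I₀, Submodule.map (g : N →ₗ[ℂ] N) (Submodule.map M.subtype (Mi i)) =
        Submodule.map M.subtype (Mi' i)) ∧
      (∀ i ∉ I₀, Submodule.map (g : N →ₗ[ℂ] N) (Submodule.map M.subtype (Mi i) ⊔ L) =
        Submodule.map M.subtype (Mi' i) ⊔ L)) :
    ∃ h : ↥M ≃ₗ[ℂ] ↥M, ∀ i, Submodule.map (h : ↥M →ₗ[ℂ] ↥M) (Mi i) = Mi' i := by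
  obtain ⟨g, hg₀, hg₁⟩ := hg
  obtain ⟨e, heL, he0⟩ := L.exists_mem_ne_zero_of_ne_bot (by rintro rfl; simp at hL)
  obtain rfl := eq_span_singleton_of_mem_of_finrank_eq_one hL heL he0
  have heM : e ∉ M := (disjoint_span_singleton' he0).mp hcompl.disjoint
  set W := ⨆ i : I₀, (Mi i).map M.subtype
  have hWM : W ≤ M := iSup_le fun i => map_subtype_le _ _
  have hgW : W.map (g : N →ₗ[ℂ] N) ≤ M := by
    rw [Submodule.map_iSup]
    exact iSup_le fun i => (hg₀ i i.2).le.trans (map_subtype_le _ _)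
  have hw : g.symm e ∉ W := fun h => heM (by simpa using hgW (mem_map_of_mem h))
  obtain ⟨t, htW, htL, htM⟩ := exists_linearEquiv_fixing_symm_apply_notMem hWM heM hw
  have hdisj : Disjoint (M.map ((t.trans g : N ≃ₗ[ℂ] N) : N →ₗ[ℂ] N)) (ℂ ∙ e) := by
    rwa [disjoint_span_singleton' he0, mem_map_equiv]
  refine exists_linearEquiv_map_eq_of_disjoint hcompl _ hdisj I₀ Mi Mi' (fun i hi => ?_)
    (fun i hi => ?_)
  · rw [LinearEquiv.coe_trans, map_comp, map_eq_self_of_forall_mem_apply_eq fun x hx =>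
      htW x (le_iSup (fun j : I₀ => (Mi j).map M.subtype) ⟨i, hi⟩ hx), hg₀ i hi]
  · rw [LinearEquiv.coe_trans, map_comp, map_eq_self_of_forall_apply_sub_mem htL le_sup_right,
      hg₁ i hi]
end

section
/- Let V be a countable-dimensional complex vector space and let G = GL(E) be the group of linear automorphisms of V fixing all but finitely many vectors of a fixed basis E of V. If A ⊊ B are subspaces of V with A strictly contained in B, then there is no g ∈ G with g(A) = B. -/
/-!
Write `g = 1 + d`; since `g` moves only finitely many basis vectors, `F = range d` is
finite-dimensional, and `gᵏ v - v ∈ F` for all `k`. If `g A = B ⊋ A`, injectivity of `g`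
makes `A < g A < g² A < ⋯` a strictly increasing chain squeezed between `A` and `A ⊔ F`.
By the modular law `gᵏ A = A ⊔ (F ⊓ gᵏ A)`, so the `F ⊓ gᵏ A` form a strictly increasing
chain of subspaces of `F`, which is impossible.
-/

open Module Submodule

section

variable {K V : Type*} [DivisionRing K] [AddCommGroup V] [Module K V]

theorem Submodule.not_strictMono_of_le_of_le_sup {s : ℕ → Submodule K V}
    (A F : Submodule K V) [FiniteDimensional K F] (hA : ∀ k, A ≤ s k) (hF : ∀ k, s k ≤ A ⊔ F) :
    ¬ StrictMono s := by
  intro hs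
  have hs_eq : ∀ k, A ⊔ F ⊓ s k = s k := fun k => by
    rw [← sup_inf_assoc_of_le F (hA k), inf_eq_right.mpr (hF k)]
  have ht : StrictMono fun k => F ⊓ s k :=
    Monotone.strictMono_of_injective (fun i j hij => inf_le_inf_left F (hs.monotone hij))
      fun i j hij => hs.injective <| by rw [← hs_eq i, ← hs_eq j]; exact congrArg (A ⊔ ·) hij
  have hrank : StrictMono fun k => finrank K ↥(F ⊓ s k) := fun i j hij =>
    have := Submodule.finiteDimensional_of_le (inf_le_left : F ⊓ s j ≤ F)
    finrank_lt_finrank_of_lt (ht hij)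
  have hlow := hrank.id_le (finrank K F + 1)
  have hhigh := finrank_mono (inf_le_left : F ⊓ s (finrank K F + 1) ≤ F)
  simp only [_root_.id] at hlow
  omega

namespace Module.End

theorem finiteDimensional_range_sub_one {ι : Type*} (E : Basis ι K V) {f : End K V}
    (hf : {i | f (E i) ≠ E i}.Finite) : FiniteDimensional K (LinearMap.range (f - 1)) := by
  have hle : LinearMap.range (f - 1) ≤
      span K ((fun i => (f - 1) (E i)) '' {i | f (E i) ≠ E i}) := by
    rw [LinearMap.range_eq_map, ← E.span_eq, map_span, span_le]
    rintro _ ⟨_, ⟨i, rfl⟩, rfl⟩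
    by_cases hi : f (E i) ≠ E i
    · exact subset_span ⟨i, hi, rfl⟩
    · simp [not_not.mp hi]
  have := FiniteDimensional.span_of_finite K (hf.image fun i => (f - 1) (E i))
  exact Submodule.finiteDimensional_of_le hle

theorem pow_apply_sub_mem_range_sub_one (f : End K V) (k : ℕ) (v : V) :
    (f ^ k) v - v ∈ LinearMap.range (f - 1) := by
  have : (f ^ k) v - v = (f - 1) ((∑ i ∈ Finset.range k, f ^ i) v) := by
    rw [← mul_apply, mul_geom_sum]
    rfl
  exact this ▸ LinearMap.mem_range_self _ _

theorem map_eq_of_le_map {f : End K V} (hf : Function.Injective f)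
    [FiniteDimensional K (LinearMap.range (f - 1))] {A : Submodule K V} (hA : A ≤ A.map f) :
    A.map f = A := by
  by_contra hne
  set s : ℕ → Submodule K V := fun k => A.map (f ^ k)
  have hs_succ : ∀ k, s (k + 1) = (A.map f).map (f ^ k) := fun k => by
    simp only [s, pow_succ, mul_eq_comp, map_comp]
  have hs : StrictMono s := strictMono_nat_of_lt_succ fun k => by
    rw [hs_succ]
    exact map_strictMono_of_injective (iterate_injective hf k) (hA.lt_of_ne (Ne.symm hne))
  refine not_strictMono_of_le_of_le_sup A (LinearMap.range (f - 1)) (fun k => ?_)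
    (fun k => ?_) hs
  · simpa [s, one_eq_id] using hs.monotone (Nat.zero_le k)
  · rintro _ ⟨a, ha, rfl⟩
    rw [← add_sub_cancel a ((f ^ k) a)]
    exact add_mem_sup ha (pow_apply_sub_mem_range_sub_one f k a)

end Module.End

end

theorem stmt1_general {ι V : Type*} [AddCommGroup V] [Module ℂ V]
    (E : Module.Basis ι ℂ V) (A B : Submodule ℂ V) (hAB : A < B) :
    ¬ ∃ g : V ≃ₗ[ℂ] V, {i | g (E i) ≠ E i}.Finite ∧
      Submodule.map (g : V →ₗ[ℂ] V) A = B := by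
  rintro ⟨g, hfin, hmap⟩
  have := Module.End.finiteDimensional_range_sub_one E (f := g) hfin
  have hA : A ≤ A.map (g : V →ₗ[ℂ] V) := hmap ▸ hAB.le
  exact hAB.ne (hmap ▸ Module.End.map_eq_of_le_map g.injective hA).symm

/-- If `V` is a countable-dimensional complex vector space with basis `E`
and `G = GL(E)` is the group of automorphisms fixing all but finitely many basis vectors,
then no element of `G` can map a subspace `A` onto a strictly larger subspace `B`. -/
theorem stmt1 {ι V : Type*} [Countable ι] [AddCommGroup V] [Module ℂ V]
    (E : Module.Basis ι ℂ V) (A B : Submodule ℂ V) (hAB : A < B) :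
    ¬ ∃ g : V ≃ₗ[ℂ] V, {i | g (E i) ≠ E i}.Finite ∧
      Submodule.map (g : V →ₗ[ℂ] V) A = B :=
  stmt1_general E A B hAB
end

section
/- Let c₁,…,c_p and d₁,…,d_q be positive integers with c₁+⋯+c_p = d₁+⋯+d_q = m. Fix p₀ ∈ {1,…,p} and let C = Σ_{k≠p₀} c_k. Then the number of double cosets 𝔖_{c₁}×⋯×𝔖_{c_p} \ 𝔖_m / 𝔖_{d₁}×⋯×𝔖_{d_q} is at most q^C. -/
/-- The Young subgroup of `Perm (Fin m)` determined by a block-assignment function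
`b : Fin m → Fin p`: permutations preserving each block. -/
def Young {m p : ℕ} (b : Fin m → Fin p) : Subgroup (Equiv.Perm (Fin m)) where
  carrier := {σ | ∀ i, b (σ i) = b i}
  one_mem' := fun _ => rfl
  mul_mem' := by
    intro σ τ hσ hτ i
    simp only [Set.mem_setOf_eq] at *
    rw [Equiv.Perm.mul_apply, hσ, hτ]
  inv_mem' := by
    intro σ hσ i
    simp only [Set.mem_setOf_eq] at *
    conv_rhs => rw [← Equiv.apply_symm_apply σ i]
    rw [hσ]; rfl

/-! The double coset of `σ` is determined by the word `i ↦ b₂ (σ⁻¹ i)` up to permutations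
preserving the blocks of `b₁`, that is, by how many positions of each block carry each letter.
The letter counts of the whole word are those of `b₂`, so the counts inside block `p₀` are forced
by the rest: the double coset is determined by the letters at the `C` positions outside block `p₀`,
which leaves at most `q ^ C` possibilities. -/

open Finset Function

lemma Nat.card_le_card_of_factorsThrough {A B Q : Type*} [Finite B] {f : A → Q} {g : A → B}
    (hf : Surjective f) (hfg : f.FactorsThrough g) : Nat.card Q ≤ Nat.card B := by
  cases isEmpty_or_nonempty Q with
  | inl _ => simp
  | inr _ =>
    refine Nat.card_le_card_of_surjective (extend g f fun _ => Classical.arbitrary Q) ?_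
    intro y
    obtain ⟨a, rfl⟩ := hf y
    exact ⟨g a, hfg.extend_apply _ a⟩

lemma Finset.card_filter_comp_perm {α : Type*} [Fintype α] (σ : Equiv.Perm α)
    (P : α → Prop) [DecidablePred P] : #{x | P (σ x)} = #{x | P x} := by
  simp only [← Fintype.card_subtype]
  exact Fintype.card_congr (σ.subtypeEquiv fun _ => Iff.rfl)

lemma exists_perm_comp_eq_of_card_fiber_eq {α β : Type*} [Fintype α] [DecidableEq β]
    {f g : α → β} (h : ∀ y, #{x | f x = y} = #{x | g x = y}) :
    ∃ π : Equiv.Perm α, ∀ x, f (π x) = g x :=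
  have e y : {x // g x = y} ≃ {x // f x = y} :=
    Fintype.equivOfCardEq (by simp only [Fintype.card_subtype, h])
  ⟨Equiv.ofFiberEquiv e, Equiv.ofFiberEquiv_map e⟩

lemma card_fiber_prod_eq_of_eq_off_fiber {α β γ : Type*} [Fintype α] [DecidableEq β]
    [DecidableEq γ] {f g : α → β} (h : ∀ y, #{x | f x = y} = #{x | g x = y})
    (b : α → γ) (k₀ : γ) (hfg : ∀ x, b x ≠ k₀ → f x = g x) (z : γ × β) :
    #{x | (b x, f x) = z} = #{x | (b x, g x) = z} := by
  obtain ⟨k, y⟩ := z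
  simp only [Prod.mk.injEq]
  by_cases hk : k = k₀
  · subst hk
    have hoff : #{x | b x ≠ k ∧ f x = y} = #{x | b x ≠ k ∧ g x = y} := by
      congr 1
      exact filter_congr fun x _ => and_congr_right fun hx => by rw [hfg x hx]
    have hsplit (φ : α → β) : #{x | b x = k ∧ φ x = y} + #{x | b x ≠ k ∧ φ x = y} =
        #{x | φ x = y} := by
      rw [← card_filter_add_card_filter_not (s := {x | φ x = y}) (p := fun x => b x = k)]
      simp only [filter_filter, and_comm]
    have := hsplit f
    have := hsplit g
    have := h y
    omega
  · exact congrArg card <| filter_congr fun x _ => and_congr_right fun hx =>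
      by rw [hfg x (hx ▸ hk)]

lemma Nat.card_subtype_ne_eq_sum_card_fiber {α γ : Type*} [Fintype α] [Fintype γ]
    [DecidableEq γ] (b : α → γ) (k₀ : γ) :
    Nat.card {x // b x ≠ k₀} = ∑ k ∈ univ.erase k₀, #{x | b x = k} := by
  rw [Nat.card_eq_fintype_card, Fintype.card_subtype,
    card_eq_sum_card_fiberwise (t := univ.erase k₀) fun x hx => by simpa using hx]
  refine Finset.sum_congr rfl fun k hk => ?_
  rw [filter_filter]
  congr 1
  exact filter_congr fun x _ => ⟨fun h => h.2, fun h => ⟨h ▸ ne_of_mem_erase hk, h⟩⟩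

lemma Young.doubleCoset_mk_eq_of_mem {m p q : ℕ} {b₁ : Fin m → Fin p} {b₂ : Fin m → Fin q}
    {σ τ π : Equiv.Perm (Fin m)} (hπ : π ∈ Young b₁) (h : ∀ x, b₂ (σ⁻¹ (π x)) = b₂ (τ⁻¹ x)) :
    DoubleCoset.mk (Young b₁) (Young b₂) σ = DoubleCoset.mk (Young b₁) (Young b₂) τ := by
  have hK : σ⁻¹ * π * τ ∈ Young b₂ := fun x => by simpa using h (τ x)
  rw [DoubleCoset.eq]
  exact ⟨π⁻¹, inv_mem hπ, σ⁻¹ * π * τ, hK, by group⟩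

lemma Young.doubleCoset_mk_eq_of_eq_off_fiber {m p q : ℕ} (b₁ : Fin m → Fin p)
    (b₂ : Fin m → Fin q) (k₀ : Fin p) {σ τ : Equiv.Perm (Fin m)}
    (h : ∀ i, b₁ i ≠ k₀ → b₂ (σ⁻¹ i) = b₂ (τ⁻¹ i)) :
    DoubleCoset.mk (Young b₁) (Young b₂) σ = DoubleCoset.mk (Young b₁) (Young b₂) τ := by
  have hcard j : #{i | b₂ (σ⁻¹ i) = j} = #{i | b₂ (τ⁻¹ i) = j} := by
    rw [card_filter_comp_perm σ⁻¹ (b₂ · = j), card_filter_comp_perm τ⁻¹ (b₂ · = j)]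
  obtain ⟨π, hπ⟩ := exists_perm_comp_eq_of_card_fiber_eq
    (card_fiber_prod_eq_of_eq_off_fiber hcard b₁ k₀ h)
  simp only [Prod.mk.injEq] at hπ
  exact doubleCoset_mk_eq_of_mem (fun x => (hπ x).1) fun x => (hπ x).2

theorem stmt2_general {m p q : ℕ} (c : Fin p → ℕ)
    (b₁ : Fin m → Fin p) (b₂ : Fin m → Fin q)
    (hfib₁ : ∀ k, (Finset.univ.filter fun i => b₁ i = k).card = c k)
    (p₀ : Fin p) :
    Nat.card (DoubleCoset.Quotient (Young b₁ : Set (Equiv.Perm (Fin m)))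
        (Young b₂ : Set (Equiv.Perm (Fin m)))) ≤
      q ^ (∑ k ∈ Finset.univ.erase p₀, c k) := by
  have hle := Nat.card_le_card_of_factorsThrough (B := {i // b₁ i ≠ p₀} → Fin q)
    (g := fun (σ : Equiv.Perm (Fin m)) i => b₂ (σ⁻¹ i.1))
    (Quotient.mk''_surjective (s₁ := DoubleCoset.setoid _ _))
    fun σ τ hστ => Young.doubleCoset_mk_eq_of_eq_off_fiber b₁ b₂ p₀ fun i hi =>
      congrFun hστ ⟨i, hi⟩
  rwa [Nat.card_fun, Nat.card_subtype_ne_eq_sum_card_fiber, Nat.card_fin,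
    Finset.sum_congr rfl fun k _ => hfib₁ k] at hle

/-- With `c₁ + ⋯ + c_p = d₁ + ⋯ + d_q = m` (all parts positive), and Young
subgroups given by monotone block functions with fibers of sizes `c_k`, resp. `d_j`,
the number of double cosets `𝔖_c \ 𝔖_m / 𝔖_d` is at most `q ^ C` where
`C = ∑_{k ≠ p₀} c_k`. -/
theorem stmt2 {m p q : ℕ} (c : Fin p → ℕ) (d : Fin q → ℕ)
    (hc : ∀ k, 0 < c k) (hd : ∀ j, 0 < d j)
    (hcm : ∑ k, c k = m) (hdm : ∑ j, d j = m)
    (b₁ : Fin m → Fin p) (b₂ : Fin m → Fin q)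
    (hb₁ : Monotone b₁) (hb₂ : Monotone b₂)
    (hfib₁ : ∀ k, (Finset.univ.filter fun i => b₁ i = k).card = c k)
    (hfib₂ : ∀ j, (Finset.univ.filter fun i => b₂ i = j).card = d j)
    (p₀ : Fin p) :
    Nat.card (DoubleCoset.Quotient (Young b₁ : Set (Equiv.Perm (Fin m)))
        (Young b₂ : Set (Equiv.Perm (Fin m)))) ≤
      q ^ (∑ k ∈ Finset.univ.erase p₀, c k) :=
  stmt2_general c b₁ b₂ hfib₁ p₀
end

section
/- A map τ : {1,…,m} → {1,…,q} such that |τ⁻¹(j)| = d_j for each j is determined, among all maps in its orbit under the Young subgroup 𝔖_{c₁}×⋯×𝔖_{c_p} that are nondecreasing on each block [c̄_{k−1}+1, c̄_k] (where c̄_k = c₁+⋯+c_k), uniquely by its restriction to the complement of one block [c̄_{p₀−1}+1, c̄_{p₀}]. Consequently the number of orbits of the Young subgroup on such maps τ is at most q^C where C = Σ_{k≠p₀} c_k. -/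
/-!
On a finite chain, a monotone map is determined by its multiset of values, since
`f a ≤ v ↔ #{x ≤ a} ≤ #{x | f x ≤ v}`. Hence two blockwise-nondecreasing maps with the same
fibre sizes that agree off the block `p₀` also have the same multiset of values on `p₀`, and so
agree there too. Sorting positions lexicographically by (block, value) picks a
blockwise-nondecreasing representative of each orbit that depends only on the orbit, so
restricting it to the complement of `p₀` injects the orbits into the maps from that complement
to `Fin q`.
-/

open Finset

section MonotoneOnFinset

variable {ι β : Type*} [LinearOrder ι] [LinearOrder β] {s : Finset ι} {f g : ι → β}

theorem MonotoneOn.le_iff_card_filter_le (hf : MonotoneOn f s) {a : ι} (ha : a ∈ s) (v : β) :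
    f a ≤ v ↔ #{x ∈ s | x ≤ a} ≤ #{x ∈ s | f x ≤ v} := by
  constructor
  · intro hav
    refine card_le_card fun x hx => ?_
    simp only [mem_filter] at hx ⊢
    exact ⟨hx.1, (hf hx.1 ha hx.2).trans hav⟩
  · contrapose!
    intro hva
    have hsub : {x ∈ s | f x ≤ v} ⊆ {x ∈ s | x < a} := fun x hx => by
      simp only [mem_filter] at hx ⊢
      exact ⟨hx.1, lt_of_not_ge fun hax => (hva.trans_le (hf ha hx.1 hax)).not_ge hx.2⟩
    have hssub : {x ∈ s | x < a} ⊂ {x ∈ s | x ≤ a} :=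
      (ssubset_iff_of_subset (monotone_filter_right s fun _ _ => le_of_lt)).2
        ⟨a, by simp [ha], by simp⟩
    exact (card_le_card hsub).trans_lt (card_lt_card hssub)

theorem Finset.card_filter_comp_eq_of_card_fiber_eq {ι β : Type*} [DecidableEq β] {s : Finset ι}
    {f g : ι → β} (h : ∀ v, #{x ∈ s | f x = v} = #{x ∈ s | g x = v}) (P : β → Prop)
    [DecidablePred P] : #{x ∈ s | P (f x)} = #{x ∈ s | P (g x)} := by
  have hmap : s.val.map f = s.val.map g := Multiset.ext.2 fun v => by
    simpa only [Multiset.count_map, eq_comm (a := v), card_def, filter_val] using h v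
  have key := congrArg (fun t => Multiset.card (t.filter P)) hmap
  simpa only [Multiset.filter_map, Multiset.card_map, card_def, filter_val, Function.comp_def]
    using key

theorem MonotoneOn.eqOn_of_card_fiber_eq [DecidableEq β] (hf : MonotoneOn f s)
    (hg : MonotoneOn g s) (h : ∀ v, #{x ∈ s | f x = v} = #{x ∈ s | g x = v}) :
    Set.EqOn f g s := by
  intro a ha
  have key : ∀ v, f a ≤ v ↔ g a ≤ v := fun v => by
    rw [hf.le_iff_card_filter_le ha, hg.le_iff_card_filter_le ha,
      card_filter_comp_eq_of_card_fiber_eq h (· ≤ v)]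
  exact le_antisymm ((key (g a)).2 le_rfl) ((key (f a)).1 le_rfl)

end MonotoneOnFinset

section Blockwise

variable {ι κ β : Type*} [LinearOrder ι] [LinearOrder β]

def BlockwiseMonotone (b : ι → κ) (τ : ι → β) : Prop :=
  ∀ i j, i ≤ j → b i = b j → τ i ≤ τ j

variable [Fintype ι] [DecidableEq κ] {b : ι → κ} {τ τ' : ι → β}

theorem BlockwiseMonotone.monotoneOn_block (hτ : BlockwiseMonotone b τ) (k : κ) :
    MonotoneOn τ ↑({i | b i = k} : Finset ι) := fun i hi j hj hij => by
  simp only [coe_filter, mem_univ, true_and, Set.mem_ofPred_eq] at hi hj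
  exact hτ i j hij (hi.trans hj.symm)

omit [LinearOrder ι] [LinearOrder β] in
theorem card_fiber_eq_add_card_fiber_block [DecidableEq β] (b : ι → κ) (τ : ι → β) (k : κ)
    (v : β) :
    #{i | τ i = v} = #{i | b i = k ∧ τ i = v} + #{i | b i ≠ k ∧ τ i = v} := by
  rw [← card_filter_add_card_filter_not (s := {i | τ i = v}) (fun i => b i = k),
    filter_filter, filter_filter]
  congr 2 <;> ext i <;> simp [and_comm]

theorem BlockwiseMonotone.eq_of_eqOn_compl_block [DecidableEq β] (hτ : BlockwiseMonotone b τ)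
    (hτ' : BlockwiseMonotone b τ') (hcard : ∀ v, #{i | τ i = v} = #{i | τ' i = v}) (k : κ)
    (hagree : ∀ i, b i ≠ k → τ i = τ' i) : τ = τ' := by
  have hout : ∀ v, #{i | b i ≠ k ∧ τ i = v} = #{i | b i ≠ k ∧ τ' i = v} := fun v =>
    congrArg card (filter_congr fun i _ => and_congr_right fun hi => by rw [hagree i hi])
  have hblock : Set.EqOn τ τ' ↑({i | b i = k} : Finset ι) :=
    (hτ.monotoneOn_block k).eqOn_of_card_fiber_eq (hτ'.monotoneOn_block k) fun v => by
      have h := hcard v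
      rw [card_fiber_eq_add_card_fiber_block b τ k, card_fiber_eq_add_card_fiber_block b τ' k,
        hout] at h
      rw [filter_filter, filter_filter]
      omega
  funext i
  by_cases hi : b i = k
  · exact hblock (by simpa using hi)
  · exact hagree i hi

end Blockwise

section BlockSort

variable {m : ℕ} {κ β : Type*} [LinearOrder κ] [LinearOrder β] {b : Fin m → κ} {τ : Fin m → β}

/-- Sorting positions lexicographically by (block, value); `τ ∘ blockSort b τ` is the normal form
of `τ` in its orbit. -/
def blockSort (b : Fin m → κ) (τ : Fin m → β) : Equiv.Perm (Fin m) :=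
  Tuple.sort fun i => toLex (b i, τ i)

theorem comp_blockSort_of_monotone (hb : Monotone b) : b ∘ blockSort b τ = b :=
  Tuple.unique_monotone (σ := blockSort b τ) (τ := 1)
    (fun _ _ hij =>
      Prod.Lex.monotone_fst _ _ (Tuple.monotone_sort (fun i => toLex (b i, τ i)) hij))
    hb

theorem blockwiseMonotone_comp_blockSort (hb : Monotone b) :
    BlockwiseMonotone b (τ ∘ blockSort b τ) := by
  intro i j hij hbij
  set σ := blockSort b τ
  have hblock : ∀ i, b (σ i) = b i := congrFun (comp_blockSort_of_monotone hb)
  have hlex : toLex (b (σ i), τ (σ i)) ≤ toLex (b (σ j), τ (σ j)) :=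
    Tuple.monotone_sort (fun i => toLex (b i, τ i)) hij
  rw [hblock, hblock, hbij, Prod.Lex.toLex_le_toLex] at hlex
  simpa using hlex

theorem comp_perm_comp_blockSort {σ : Equiv.Perm (Fin m)} (hσ : ∀ i, b (σ i) = b i) :
    (τ ∘ σ) ∘ blockSort b (τ ∘ σ) = τ ∘ blockSort b τ := by
  set L : Fin m → Lex (κ × β) := fun i => toLex (b i, τ i)
  have hL : (fun i => toLex (b i, (τ ∘ σ) i)) = L ∘ σ := funext fun i => by simp [L, hσ]
  have hsorted : L ∘ ⇑(σ * blockSort b (τ ∘ σ)) = L ∘ blockSort b τ := by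
    rw [blockSort, hL]
    exact Tuple.unique_monotone (Tuple.monotone_sort (L ∘ σ)) (Tuple.monotone_sort L)
  exact congrArg (fun F i => (ofLex (F i)).2) hsorted

end BlockSort

theorem card_fiber_comp_perm {ι β : Type*} [Fintype ι] [DecidableEq β] (τ : ι → β)
    (σ : Equiv.Perm ι) (v : β) : #{i | (τ ∘ σ) i = v} = #{i | τ i = v} :=
  card_equiv σ (by simp)

theorem card_filter_ne_eq_sum_card_fiber {ι κ : Type*} [Fintype ι] [Fintype κ] [DecidableEq κ]
    (b : ι → κ) (k : κ) : #{i | b i ≠ k} = ∑ j ∈ univ.erase k, #{i | b i = j} := by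
  rw [sum_card_fiberwise_eq_card_filter]
  simp

section YoungOrbits

variable {m : ℕ} {κ β : Type*} [LinearOrder κ] [LinearOrder β] [DecidableEq β]

abbrev MapsWithFiberCards (d : β → ℕ) := {τ : Fin m → β // ∀ v, #{i | τ i = v} = d v}

abbrev YoungOrbits (b : Fin m → κ) (d : β → ℕ) :=
  Quot fun (τ τ' : MapsWithFiberCards (m := m) d) =>
    ∃ σ : Equiv.Perm (Fin m), (∀ i, b (σ i) = b i) ∧ τ'.1 = τ.1 ∘ σ

variable {b : Fin m → κ} {d : β → ℕ}

theorem YoungOrbits.mk_eq_mk_comp_blockSort (hb : Monotone b) (τ : MapsWithFiberCards d) :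
    (Quot.mk _ τ : YoungOrbits b d) =
      Quot.mk _ ⟨τ.1 ∘ blockSort b τ.1, fun v => (card_fiber_comp_perm _ _ v).trans (τ.2 v)⟩ :=
  Quot.sound ⟨blockSort b τ.1, congrFun (comp_blockSort_of_monotone hb), rfl⟩

theorem YoungOrbits.card_le [DecidableEq κ] [Finite β] (hb : Monotone b) (k : κ) :
    Nat.card (YoungOrbits b d) ≤ Nat.card β ^ #{i | b i ≠ k} := by
  let F : YoungOrbits b d → ({i // b i ≠ k} → β) :=
    Quot.lift (fun τ i => (τ.1 ∘ blockSort b τ.1) i) fun τ τ' ⟨σ, hσ, hτ'⟩ => by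
      simp only [hτ', comp_perm_comp_blockSort hσ]
  have hF : Function.Injective F := by
    rintro ⟨τ⟩ ⟨τ'⟩ h
    rw [mk_eq_mk_comp_blockSort hb τ, mk_eq_mk_comp_blockSort hb τ']
    congr 2
    refine BlockwiseMonotone.eq_of_eqOn_compl_block (blockwiseMonotone_comp_blockSort hb)
      (blockwiseMonotone_comp_blockSort hb) (fun v => ?_) k fun i hi => congrFun h ⟨i, hi⟩
    rw [card_fiber_comp_perm, card_fiber_comp_perm, τ.2, τ'.2]
  calc Nat.card (YoungOrbits b d) ≤ Nat.card ({i // b i ≠ k} → β) :=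
        Nat.card_le_card_of_injective F hF
    _ = Nat.card β ^ #{i | b i ≠ k} := by
        rw [Nat.card_fun, Nat.card_eq_fintype_card (α := {i // b i ≠ k}), Fintype.card_subtype]

end YoungOrbits

theorem stmt4_general {m p q : ℕ} (c : Fin p → ℕ) (d : Fin q → ℕ)
    (b : Fin m → Fin p) (hb : Monotone b)
    (hfib : ∀ k, (Finset.univ.filter fun i => b i = k).card = c k)
    (p₀ : Fin p) :
    (∀ τ τ' : Fin m → Fin q,
      (∀ j, (Finset.univ.filter fun i => τ i = j).card = d j) →
      (∀ i j : Fin m, i ≤ j → b i = b j → τ i ≤ τ j) →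
      (∀ i j : Fin m, i ≤ j → b i = b j → τ' i ≤ τ' j) →
      (∃ σ : Equiv.Perm (Fin m), (∀ i, b (σ i) = b i) ∧ τ' = τ ∘ σ) →
      (∀ i, b i ≠ p₀ → τ i = τ' i) → τ = τ') ∧
    Nat.card (Quot fun
        (τ τ' : {τ : Fin m → Fin q // ∀ j, (Finset.univ.filter fun i => τ i = j).card = d j}) =>
        ∃ σ : Equiv.Perm (Fin m), (∀ i, b (σ i) = b i) ∧ τ'.1 = τ.1 ∘ σ) ≤
      q ^ (∑ k ∈ Finset.univ.erase p₀, c k) := by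
  refine ⟨fun τ τ' _ hτ hτ' ⟨σ, _, hστ⟩ hagree => ?_, ?_⟩
  · refine BlockwiseMonotone.eq_of_eqOn_compl_block hτ hτ' (fun v => ?_) p₀ hagree
    rw [hστ, card_fiber_comp_perm]
  · calc Nat.card (YoungOrbits b d) ≤ Nat.card (Fin q) ^ #{i | b i ≠ p₀} :=
          YoungOrbits.card_le hb p₀
      _ = q ^ ∑ k ∈ univ.erase p₀, c k := by
          rw [Nat.card_fin, card_filter_ne_eq_sum_card_fiber]
          simp only [hfib]

/-- Fix a monotone block function `b : Fin m → Fin p` with fibers of sizes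
`c_k` and a distinguished block `p₀`.  (1) A map `τ : Fin m → Fin q` with fibers of sizes `d_j`
which is nondecreasing on each block is determined, among the blockwise-nondecreasing maps in
its orbit under the Young subgroup, by its restriction to the complement of the block `p₀`.
(2) The number of Young-subgroup orbits on such maps `τ` is at most `q ^ C`,
`C = ∑_{k ≠ p₀} c_k`. -/
theorem stmt4 {m p q : ℕ} (c : Fin p → ℕ) (d : Fin q → ℕ)
    (hc : ∀ k, 0 < c k) (hd : ∀ j, 0 < d j)
    (hcm : ∑ k, c k = m) (hdm : ∑ j, d j = m)
    (b : Fin m → Fin p) (hb : Monotone b)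
    (hfib : ∀ k, (Finset.univ.filter fun i => b i = k).card = c k)
    (p₀ : Fin p) :
    (∀ τ τ' : Fin m → Fin q,
      (∀ j, (Finset.univ.filter fun i => τ i = j).card = d j) →
      (∀ i j : Fin m, i ≤ j → b i = b j → τ i ≤ τ j) →
      (∀ i j : Fin m, i ≤ j → b i = b j → τ' i ≤ τ' j) →
      (∃ σ : Equiv.Perm (Fin m), (∀ i, b (σ i) = b i) ∧ τ' = τ ∘ σ) →
      (∀ i, b i ≠ p₀ → τ i = τ' i) → τ = τ') ∧
    Nat.card (Quot fun
        (τ τ' : {τ : Fin m → Fin q // ∀ j, (Finset.univ.filter fun i => τ i = j).card = d j}) =>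
        ∃ σ : Equiv.Perm (Fin m), (∀ i, b (σ i) = b i) ∧ τ'.1 = τ.1 ∘ σ) ≤
      q ^ (∑ k ∈ Finset.univ.erase p₀, c k) :=
  stmt4_general c d b hb hfib p₀
end

section
/- Let V be a countable-dimensional complex vector space and V_* ⊂ V^* a countable-dimensional subspace with nondegenerate pairing V_* × V → ℂ. Let E be a basis of V whose dual family {φ_e : e ∈ E} spans V_*. Then the group GL(∞) := {g ∈ GL(V) : g(V_*) = V_*, and g fixes pointwise finite-codimensional subspaces of V and V_*} coincides with GL(E) := {g ∈ GL(V) : g(e) = e for almost all e ∈ E}. -/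
/-!
A functional lies in `span (range E.coord)` exactly when it is nonzero on only finitely many `E i`.

If `g` moves only finitely many `E i`, so does `g⁻¹`, and composing with `g` or `g⁻¹` keeps that
finiteness, so the transpose preserves `V_*`. The fixed space of `g` contains every unmoved `E i`,
and the transpose fixes every `E.coord i` with `i` outside the finite union of the supports of the
`g (E j) - E j`; both fixed spaces therefore have finite codimension.

Conversely, if the transpose fixes `Ws` with `V_* = Ws + F`, `F` finite-dimensional, then the
functionals `φ ∘ g - φ` with `φ ∈ F` form a finite-dimensional subspace of `V_*`, hence all vanish
at `E i` for almost all `i`. Writing each `E.coord j` as an element of `Ws` plus one of `F` shows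
that every coordinate of `g (E i) - E i` then vanishes.
-/

open Module Submodule Set

namespace Submodule

variable {R M : Type*} [Ring R] [AddCommGroup M] [Module R M]

theorem finite_quotient_of_span_eq_top {t u : Set M} (ht : span R t = ⊤) (hu : u.Finite)
    {q : Submodule R M} (h : t \ u ⊆ q) : Module.Finite R (M ⧸ q) := by
  have hspan : span R (q.mkQ '' u) = ⊤ := by
    rw [eq_top_iff, ← q.range_mkQ, LinearMap.range_eq_map, ← ht, map_span, span_le]
    rintro _ ⟨x, hx, rfl⟩
    by_cases hxu : x ∈ u
    · exact subset_span (mem_image_of_mem _ hxu)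
    · rw [mkQ_apply, (Quotient.mk_eq_zero q).mpr (h ⟨hx, hxu⟩)]
      exact zero_mem _
  exact Module.finite_def.mpr (hspan ▸ fg_span (hu.image _))

theorem finite_quotient_comap_subtype_span {t u : Set M} (hu : u.Finite) {q : Submodule R M}
    (h : t \ u ⊆ q) : Module.Finite R (span R t ⧸ comap (span R t).subtype q) :=
  finite_quotient_of_span_eq_top span_span_coe_preimage
    (hu.preimage Subtype.val_injective.injOn) fun _ hx => h hx

theorem exists_fg_le_sup_of_finite_quotient_comap {p q : Submodule R M}
    (h : Module.Finite R (p ⧸ comap p.subtype q)) :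
    ∃ F : Submodule R M, F.FG ∧ F ≤ p ∧ p ≤ q ⊔ F := by
  obtain ⟨s, hs⟩ := Module.finite_def.mp h
  set G := span R (Quotient.out '' (s : Set (p ⧸ comap p.subtype q)))
  have hG : comap p.subtype q ⊔ G = ⊤ := by
    rw [← map_mkQ_eq_top, map_span, ← image_comp, ← hs]
    congr
    ext x
    simp
  refine ⟨G.map p.subtype, (fg_span (s.finite_toSet.image _)).map _, map_subtype_le p G, ?_⟩
  calc p = (comap p.subtype q ⊔ G).map p.subtype := by rw [hG, map_subtype_top]
    _ ≤ q ⊔ G.map p.subtype := by rw [map_sup]; exact sup_le_sup_right (map_comap_le _ _) _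

end Submodule

theorem Submodule.FG.finite_setOf_exists_apply_ne_zero {R M ι : Type*} [CommSemiring R]
    [AddCommMonoid M] [Module R M] {F : Submodule R (Dual R M)} (hF : F.FG) (v : ι → M)
    (hfin : ∀ φ ∈ F, {i | φ (v i) ≠ 0}.Finite) : {i | ∃ φ ∈ F, φ (v i) ≠ 0}.Finite := by
  obtain ⟨s, rfl⟩ := hF
  refine (s.finite_toSet.biUnion fun φ hφ => hfin φ (subset_span hφ)).subset ?_
  rintro i ⟨φ, hφ, hne⟩
  by_contra! hi
  have hker : span R (s : Set (Dual R M)) ≤ LinearMap.ker (Dual.eval R M (v i)) :=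
    span_le.mpr fun ψ hψ => of_not_not fun h0 => hi (mem_biUnion hψ (by simpa using h0))
  exact hne (hker hφ)

namespace Module.Basis

variable {ι R M : Type*}

section CommSemiring

variable [CommSemiring R] [AddCommMonoid M] [Module R M] (b : Basis ι R M)

theorem mem_span_range_coord_iff (φ : Dual R M) :
    φ ∈ span R (range b.coord) ↔ {i | φ (b i) ≠ 0}.Finite := by
  classical
  have hspan : span R (range b.coord) = LinearMap.range b.toDual := by
    rw [LinearMap.range_eq_map, ← b.span_eq, map_span, ← range_comp]
    congr
    ext i : 1
    exact (b.coe_toDual_self i).symm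
  rw [hspan]
  constructor
  · rintro ⟨m, rfl⟩
    simp only [toDual_eq_repr, ← Finsupp.mem_support_iff]
    exact (b.repr m).support.finite_toSet
  · intro h
    exact ⟨Finsupp.linearCombination R b (Finsupp.ofSupportFinite _ h),
      b.ext fun i => by rw [toDual_linearCombination_left]; rfl⟩

theorem comp_mem_span_range_coord {f : M →ₗ[R] M} (hf : {j | f (b j) ≠ b j}.Finite)
    {φ : Dual R M} (hφ : φ ∈ span R (range b.coord)) : φ.comp f ∈ span R (range b.coord) := by
  rw [mem_span_range_coord_iff] at hφ ⊢
  refine (hf.union hφ).subset fun i hi => ?_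
  by_cases hfi : f (b i) = b i
  · exact Or.inr (by simpa [hfi] using hi)
  · exact Or.inl hfi

theorem map_dualMap_symm_span_range_coord {g : M ≃ₗ[R] M}
    (hg : {i | g (b i) ≠ b i}.Finite) :
    map (g.symm : M →ₗ[R] M).dualMap (span R (range b.coord)) = span R (range b.coord) := by
  have hg' : {i | g.symm (b i) ≠ b i}.Finite := by
    simpa only [ne_eq, g.symm_apply_eq, eq_comm (a := b _)] using hg
  refine le_antisymm (map_le_iff_le_comap.mpr fun φ hφ => b.comp_mem_span_range_coord hg' hφ)
    fun φ hφ => ⟨φ.comp (g : M →ₗ[R] M), b.comp_mem_span_range_coord hg hφ, ?_⟩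
  ext v
  simp

end CommSemiring

section CommRing

variable [CommRing R] [AddCommGroup M] [Module R M] (b : Basis ι R M)

theorem finite_setOf_coord_comp_ne {f : M →ₗ[R] M} (hf : {j | f (b j) ≠ b j}.Finite) :
    {i | (b.coord i).comp f ≠ b.coord i}.Finite := by
  refine (hf.biUnion fun j _ => (b.repr (f (b j) - b j)).support.finite_toSet).subset
    fun i hi => ?_
  obtain ⟨j, hj⟩ : ∃ j, b.coord i (f (b j)) ≠ b.coord i (b j) := by
    by_contra! h
    exact hi (b.ext h)
  refine mem_biUnion (fun h => hj (by rw [h])) ?_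
  simpa [sub_eq_zero] using hj

theorem finite_setOf_apply_ne_of_comp_eq_self {f : M →ₗ[R] M}
    (hf : ∀ φ ∈ span R (range b.coord), φ.comp f ∈ span R (range b.coord))
    {Ws F : Submodule R (Dual R M)} (hF : F.FG) (hFle : F ≤ span R (range b.coord))
    (hle : span R (range b.coord) ≤ Ws ⊔ F) (hfix : ∀ φ ∈ Ws, φ.comp f = φ) :
    {i | f (b i) ≠ b i}.Finite := by
  set D : Dual R M →ₗ[R] Dual R M := f.dualMap - LinearMap.id
  have hD : ∀ φ v, D φ v = φ (f v) - φ v := fun _ _ => rfl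
  have hfin : ∀ ψ ∈ F.map D, {i | ψ (b i) ≠ 0}.Finite := by
    rintro _ ⟨φ, hφ, rfl⟩
    exact (b.mem_span_range_coord_iff _).mp (sub_mem (hf φ (hFle hφ)) (hFle hφ))
  refine ((hF.map D).finite_setOf_exists_apply_ne_zero b hfin).subset fun i hi => ?_
  obtain ⟨j, hj⟩ : ∃ j, b.coord j (f (b i)) ≠ b.coord j (b i) := by
    by_contra! h
    exact hi (b.ext_elem h)
  obtain ⟨w, hw, φ, hφ, hwφ⟩ := mem_sup.mp (hle (subset_span ⟨j, rfl⟩))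
  refine ⟨D φ, mem_map_of_mem hφ, fun h0 => hj ?_⟩
  rw [hD, sub_eq_zero] at h0
  rw [← hwφ, LinearMap.add_apply, LinearMap.add_apply, ← LinearMap.comp_apply w f,
    hfix w hw, h0]

end CommRing

end Module.Basis

theorem stmt5_general {ι V : Type*} [AddCommGroup V] [Module ℂ V]
    (E : Module.Basis ι ℂ V) (Vs : Submodule ℂ (Module.Dual ℂ V))
    (hVs : Vs = Submodule.span ℂ (Set.range fun i => E.coord i))
    (g : V ≃ₗ[ℂ] V) :
    (Submodule.map (LinearMap.dualMap (g.symm : V →ₗ[ℂ] V)) Vs = Vs ∧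
      (∃ W : Submodule ℂ V, FiniteDimensional ℂ (V ⧸ W) ∧ ∀ v ∈ W, g v = v) ∧
      (∃ Ws : Submodule ℂ (Module.Dual ℂ V), Ws ≤ Vs ∧
        FiniteDimensional ℂ (↥Vs ⧸ Submodule.comap Vs.subtype Ws) ∧
        ∀ φ ∈ Ws, φ.comp (g : V →ₗ[ℂ] V) = φ)) ↔
    {i | g (E i) ≠ E i}.Finite := by
  subst hVs
  refine ⟨fun ⟨hmap, _, Ws, _, hWs, hfix⟩ => ?_, fun hg => ⟨?_, ?_, ?_⟩⟩
  · obtain ⟨F, hF, hFle, hle⟩ := exists_fg_le_sup_of_finite_quotient_comap hWs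
    refine E.finite_setOf_apply_ne_of_comp_eq_self (fun φ hφ => ?_) hF hFle hle hfix
    obtain ⟨ψ, hψ, rfl⟩ := hmap.symm ▸ hφ
    rwa [show ((g.symm : V →ₗ[ℂ] V).dualMap ψ).comp (g : V →ₗ[ℂ] V) = ψ by ext; simp]
  · exact E.map_dualMap_symm_span_range_coord hg
  · refine ⟨LinearMap.eqLocus (g : V →ₗ[ℂ] V) LinearMap.id,
      finite_quotient_of_span_eq_top E.span_eq (hg.image E) ?_, fun v hv => hv⟩
    rintro _ ⟨⟨i, rfl⟩, hi⟩
    exact not_not.mp fun h => hi (mem_image_of_mem E h)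
  · refine ⟨_ ⊓ LinearMap.eqLocus (g : V →ₗ[ℂ] V).dualMap LinearMap.id, inf_le_left,
      finite_quotient_comap_subtype_span ((E.finite_setOf_coord_comp_ne hg).image E.coord) ?_,
      fun φ hφ => hφ.2⟩
    rintro _ ⟨⟨i, rfl⟩, hi⟩
    exact ⟨subset_span ⟨i, rfl⟩, not_not.mp fun h => hi (mem_image_of_mem _ h)⟩

/-- Let `V` be countable-dimensional over `ℂ`, `V_* ⊂ V^*` the span of the
dual family of a basis `E` (an admissible basis).  Then `g ∈ GL(V)` satisfies the defining
conditions of `GL(∞)` (the transpose of `g` preserves `V_*`, and `g` fixes pointwise a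
finite-codimensional subspace of `V` and of `V_*`) if and only if `g` fixes all but finitely
many vectors of `E`. -/
theorem stmt5 {ι V : Type*} [Countable ι] [AddCommGroup V] [Module ℂ V]
    (E : Module.Basis ι ℂ V) (Vs : Submodule ℂ (Module.Dual ℂ V))
    (hVs : Vs = Submodule.span ℂ (Set.range fun i => E.coord i))
    (g : V ≃ₗ[ℂ] V) :
    (Submodule.map (LinearMap.dualMap (g.symm : V →ₗ[ℂ] V)) Vs = Vs ∧
      (∃ W : Submodule ℂ V, FiniteDimensional ℂ (V ⧸ W) ∧ ∀ v ∈ W, g v = v) ∧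
      (∃ Ws : Submodule ℂ (Module.Dual ℂ V), Ws ≤ Vs ∧
        FiniteDimensional ℂ (↥Vs ⧸ Submodule.comap Vs.subtype Ws) ∧
        ∀ φ ∈ Ws, φ.comp (g : V →ₗ[ℂ] V) = φ)) ↔
    {i | g (E i) ≠ E i}.Finite :=
  stmt5_general E Vs hVs g
end

section
/- Let V be a countable-dimensional complex vector space with basis E, and let {e_n, e'_n}_{n≥1} ⊂ E be a double infinite sequence of pairwise distinct basis vectors. Define ẽ_n := e_n + e'_n, ẽ'_n := e_n − e'_n, and Ẽ := (E \ {e_n, e'_n}_{n≥1}) ∪ {ẽ_n, ẽ'_n}_{n≥1}, a new basis of V, and let H' := H(Ẽ) be the subgroup of GL(V) of elements diagonal in Ẽ. Then for every g ∈ GL(E) := {g ∈ GL(V) : g(e)=e for almost all e ∈ E}, we have g H' g⁻¹ ⊄ H(E); in particular the subgroups H(E) and H(Ẽ) of GL(E) are not conjugate in GL(E). -/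
/-! Since `g` moves only finitely many vectors of `E`, it fixes `e_n` and `e'_n` for some `n`.
The element `h ∈ H(Ẽ)` fixing `ẽ_n` and negating `ẽ'_n` (and fixing the rest of `Ẽ`) swaps
`e_n` and `e'_n`, hence so does `g h g⁻¹`, which therefore is not diagonal in `E`. -/

theorem Set.Finite.exists_forall_apply_notMem {α β ι : Type*} [Infinite α] {s : Set ι}
    (hs : s.Finite) {f : α × β → ι} (hf : Function.Injective f) : ∃ a, ∀ b, f (a, b) ∉ s := by
  obtain ⟨a, ha⟩ := ((hs.preimage hf.injOn).image Prod.fst).infinite_compl.nonempty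
  exact ⟨a, fun b hb => ha ⟨(a, b), hb, rfl⟩⟩

theorem LinearMap.apply_eq_of_map_add_of_map_sub {R V : Type*} [Ring R] [Invertible (2 : R)]
    [AddCommGroup V] [Module R V] (h : V →ₗ[R] V) {x y : V} (hadd : h (x + y) = x + y)
    (hsub : h (x - y) = -(x - y)) : h x = y := by
  have half_smul : ∀ v : V, (⅟2 : R) • (v + v) = v := fun v => by
    rw [← two_smul R, smul_smul, invOf_mul_self, one_smul]
  calc h x = h ((⅟2 : R) • ((x + y) + (x - y))) := by rw [add_add_sub_cancel, half_smul]
    _ = (⅟2 : R) • (y + y) := by rw [map_smul, map_add, hadd, hsub]; congr 1; abel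
    _ = y := half_smul y

theorem add_ne_sub_of_ne_zero (R : Type*) {V : Type*} [Ring R] [Invertible (2 : R)]
    [AddCommGroup V] [Module R V] {y : V} (hy : y ≠ 0) (x : V) : x + y ≠ x - y := by
  intro h
  have hneg : y = -y := add_left_cancel (h.trans (sub_eq_add_neg x y))
  apply hy
  rw [← one_smul R y, ← invOf_mul_self (2 : R), mul_smul, two_smul]
  nth_rewrite 2 [hneg]
  rw [add_neg_cancel, smul_zero]

theorem Module.Basis.exists_diagonal_neg_apply {ι R M : Type*} [Ring R] [AddCommGroup M]
    [Module R M] [DecidableEq ι] (b : Module.Basis ι R M) (j : ι) :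
    ∃ h : M ≃ₗ[R] M, (∀ i, ∃ c : R, h (b i) = c • b i) ∧ h (b j) = -b j ∧
      ∀ i ≠ j, h (b i) = b i := by
  let w : ι → Rˣ := fun i => if i = j then -1 else 1
  have hw : ∀ i, b.equiv (b.unitsSMul w) (Equiv.refl ι) (b i) = (w i : R) • b i := fun i => by
    rw [b.equiv_apply, Equiv.refl_apply, Module.Basis.unitsSMul_apply, Units.smul_def]
  refine ⟨b.equiv (b.unitsSMul w) (Equiv.refl ι), fun i => ⟨w i, hw i⟩, ?_, fun i hi => ?_⟩
  · simp [hw, w]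
  · simp [hw, w, hi]

theorem Module.Basis.apply_ne_smul_apply {ι R M : Type*} [Ring R] [Nontrivial R]
    [AddCommGroup M] [Module R M] (b : Module.Basis ι R M) {i j : ι} (hij : i ≠ j) (c : R) :
    b j ≠ c • b i := by
  intro h
  simpa [hij] using congrArg (fun v => b.repr v j) h

/-- Let `E` be a basis of a countable-dimensional complex vector space `V`,
`{e_n, e'_n}` a double sequence of pairwise distinct basis vectors, and `Ẽ` a basis of `V`
whose set of vectors is obtained from that of `E` by replacing the vectors `e_n, e'_n`
(`n ∈ ℕ`) by `e_n + e'_n, e_n − e'_n`.  Then for every `g ∈ GL(E)` the conjugate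
`g H(Ẽ) g⁻¹` of the diagonal subgroup of `Ẽ` is not contained in `H(E)`; in particular
`H(E)` and `H(Ẽ)` are not conjugate in `GL(E)`. -/
theorem stmt7 {ι ι' V : Type*} [AddCommGroup V] [Module ℂ V]
    (E : Module.Basis ι ℂ V) (f : ℕ × Bool → ι) (hf : Function.Injective f)
    (Et : Module.Basis ι' ℂ V)
    (hEt : Set.range ⇑Et =
      (Set.range ⇑E \ Set.range fun x : ℕ × Bool => E (f x)) ∪
      ((Set.range fun n : ℕ => E (f (n, true)) + E (f (n, false))) ∪
       (Set.range fun n : ℕ => E (f (n, true)) - E (f (n, false))))) :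
    ∀ g : V ≃ₗ[ℂ] V, {i | g (E i) ≠ E i}.Finite →
      ∃ h : V ≃ₗ[ℂ] V, (∀ j, ∃ c : ℂ, h (Et j) = c • Et j) ∧
        ¬ (∀ i, ∃ c : ℂ, (g.symm.trans (h.trans g)) (E i) = c • E i) := by
  classical
  intro g hg
  obtain ⟨n, hn⟩ := hg.exists_forall_apply_notMem hf
  have hfix : ∀ b, g (E (f (n, b))) = E (f (n, b)) := fun b => not_not.mp (hn b)
  set e := E (f (n, true))
  set e' := E (f (n, false))
  obtain ⟨j, hj⟩ : e + e' ∈ Set.range Et := by rw [hEt]; exact .inr (.inl ⟨n, rfl⟩)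
  obtain ⟨j', hj'⟩ : e - e' ∈ Set.range Et := by rw [hEt]; exact .inr (.inr ⟨n, rfl⟩)
  obtain ⟨h, hdiag, hneg, hpos⟩ := Et.exists_diagonal_neg_apply j'
  refine ⟨h, hdiag, fun hconj => ?_⟩
  have hjj' : j ≠ j' := by
    rintro rfl
    exact add_ne_sub_of_ne_zero ℂ (E.ne_zero _) e (hj.symm.trans hj')
  have hswap : h e = e' := h.toLinearMap.apply_eq_of_map_add_of_map_sub
    (by rw [← hj]; exact hpos j hjj') (by rw [← hj']; exact hneg)
  obtain ⟨c, hc⟩ := hconj (f (n, true))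
  have hconj_e : (g.symm.trans (h.trans g)) e = e' := by
    rw [LinearEquiv.trans_apply, LinearEquiv.trans_apply, g.symm_apply_eq.mpr (hfix true).symm,
      hswap, hfix false]
  exact E.apply_ne_smul_apply (hf.ne (by simp)) c (hconj_e ▸ hc)
end

section
/- Let V be a countable-dimensional complex vector space and V_* ⊂ V^* a countable-dimensional subspace pairing nondegenerately with V. Let E be a basis of V with dual family spanning V_*. Let F ⊂ V be a subspace containing a finite-codimensional subspace spanned by a subset of E (i.e. weakly E-compatible), let φ ∈ V_* with F ⊄ ker φ, and let v ∈ V \ F. Then F' := (F ∩ ker φ) ⊕ ℂv satisfies: F' contains a finite-codimensional subspace spanned by a subset of E, and there exists a finite-dimensional subspace U ⊂ V with F + U = F' + U and dim(F ∩ U) = dim(F' ∩ U). -/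
/-
Since `φ` lies in the span of the coordinate functionals, it vanishes on all but finitely many
basis vectors; removing those from a basis family witnessing the weak compatibility of `F`
yields one for `F ∩ ker φ`, and adding the line `ℂv` preserves weak compatibility.

For commensurability pick `w ∈ F` with `φ w ≠ 0`, so that `F = (F ∩ ker φ) ⊕ ℂw`, and take
`U = ℂv + ℂw`. Both `F + U` and `F' + U` equal `(F ∩ ker φ) + ℂv + ℂw`, while the modular law
gives `F ∩ U = ℂw` (as `v ∉ F`) and `F' ∩ U = ℂv` (as `w ∉ F'`).
-/

/-- A subspace `F` of `V` is weakly `E`-compatible if it contains a subspace spanned by a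
subset of the basis `E` which has finite codimension in `F`. -/
def WeaklyCompat {ι V : Type*} [AddCommGroup V] [Module ℂ V]
    (E : Module.Basis ι ℂ V) (F : Submodule ℂ V) : Prop :=
  ∃ S : Set ι, Submodule.span ℂ (⇑E '' S) ≤ F ∧
    FiniteDimensional ℂ (↥F ⧸ Submodule.comap F.subtype (Submodule.span ℂ (⇑E '' S)))

open Submodule

section Field

variable {K V : Type*} [Field K] [AddCommGroup V] [Module K V]

theorem Submodule.finiteDimensional_quotient_comap_subtype_iff (W F : Submodule K V) :
    FiniteDimensional K (F ⧸ W.comap F.subtype) ↔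
      ∃ U : Submodule K V, FiniteDimensional K U ∧ F ≤ W ⊔ U := by
  constructor
  · intro hQ
    obtain ⟨C, hC⟩ := (W.comap F.subtype).exists_isCompl
    have : FiniteDimensional K C := Module.Finite.equiv (quotientEquivOfIsCompl _ C hC)
    refine ⟨C.map F.subtype, inferInstance, ?_⟩
    calc F = (⊤ : Submodule K F).map F.subtype := (map_subtype_top F).symm
      _ = (W.comap F.subtype ⊔ C).map F.subtype := by rw [hC.sup_eq_top]
      _ ≤ W ⊔ C.map F.subtype := by
        rw [map_sup]; exact sup_le_sup_right (map_comap_le _ _) _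
  · rintro ⟨U, hU, hFU⟩
    -- `F / (F ∩ W)` is the image of `F` in `V / W`, which lies in the image of `U`.
    let g := W.mkQ ∘ₗ F.subtype
    have hker : LinearMap.ker g = W.comap F.subtype := by
      rw [LinearMap.ker_comp, ker_mkQ]
    have hrange : LinearMap.range g ≤ U.map W.mkQ := by
      rw [LinearMap.range_comp, range_subtype]
      calc F.map W.mkQ ≤ (W ⊔ U).map W.mkQ := map_mono hFU
        _ = U.map W.mkQ := by rw [map_sup, mkQ_map_self, bot_sup_eq]
    have : FiniteDimensional K (LinearMap.range g) := finiteDimensional_of_le hrange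
    exact Module.Finite.equiv ((quotEquivOfEq _ _ hker).symm.trans g.quotKerEquivRange).symm

theorem Submodule.inf_sup_span_singleton_eq_of_notMem {G F : Submodule K V} {v : V}
    (hGF : G ≤ F) (hv : v ∉ F) : F ⊓ (G ⊔ K ∙ v) = G := by
  rw [inf_comm, sup_inf_assoc_of_le _ hGF, (disjoint_span_singleton_of_notMem hv).symm.eq_bot,
    sup_bot_eq]

theorem Submodule.inf_ker_sup_span_singleton_eq {F : Submodule K V} {φ : Module.Dual K V} {w : V}
    (hw : w ∈ F) (hφw : φ w ≠ 0) : F ⊓ LinearMap.ker φ ⊔ K ∙ w = F := by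
  have h := sup_inf_assoc_of_le (LinearMap.ker φ) ((span_singleton_le_iff_mem w F).2 hw)
  rw [LinearMap.span_singleton_sup_ker_eq_top φ hφw, top_inf_eq] at h
  rw [inf_comm, sup_comm]
  exact h.symm

theorem Module.Basis.finite_setOf_apply_ne_zero_of_mem_span_coord {ι : Type*}
    (E : Module.Basis ι K V) {φ : Module.Dual K V}
    (hφ : φ ∈ span K (Set.range E.coord)) : {i | φ (E i) ≠ 0}.Finite := by
  classical
  obtain ⟨c, rfl⟩ := Finsupp.mem_span_range_iff_exists_finsupp.1 hφ
  refine c.support.finite_toSet.subset fun i hi => ?_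
  simpa [Finsupp.sum, Finsupp.single_apply] using hi

end Field

section WeaklyCompat

variable {ι V : Type*} [AddCommGroup V] [Module ℂ V] {E : Module.Basis ι ℂ V}
  {F : Submodule ℂ V}

theorem weaklyCompat_iff : WeaklyCompat E F ↔ ∃ S : Set ι, span ℂ (E '' S) ≤ F ∧
    ∃ U : Submodule ℂ V, FiniteDimensional ℂ U ∧ F ≤ span ℂ (E '' S) ⊔ U := by
  simp only [WeaklyCompat, finiteDimensional_quotient_comap_subtype_iff]

theorem WeaklyCompat.sup_of_finiteDimensional (hF : WeaklyCompat E F) (U : Submodule ℂ V)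
    [FiniteDimensional ℂ U] : WeaklyCompat E (F ⊔ U) := by
  obtain ⟨S, hSF, U₀, hU₀, hFU₀⟩ := weaklyCompat_iff.1 hF
  refine weaklyCompat_iff.2 ⟨S, hSF.trans le_sup_left, U₀ ⊔ U, inferInstance, ?_⟩
  rw [← sup_assoc]
  exact sup_le_sup_right hFU₀ U

theorem WeaklyCompat.inf_ker (hF : WeaklyCompat E F) {φ : Module.Dual ℂ V}
    (hφ : {i | φ (E i) ≠ 0}.Finite) : WeaklyCompat E (F ⊓ LinearMap.ker φ) := by
  obtain ⟨S, hSF, U, hU, hFU⟩ := weaklyCompat_iff.1 hF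
  have : FiniteDimensional ℂ (span ℂ (E '' {i | φ (E i) ≠ 0})) :=
    FiniteDimensional.span_of_finite ℂ (hφ.image E)
  refine weaklyCompat_iff.2 ⟨S ∩ {i | φ (E i) = 0}, ?_,
    span ℂ (E '' {i | φ (E i) ≠ 0}) ⊔ U, inferInstance, ?_⟩
  · rw [span_le]
    rintro _ ⟨i, ⟨hiS, hφi⟩, rfl⟩
    exact ⟨hSF (subset_span (Set.mem_image_of_mem E hiS)), hφi⟩
  · refine inf_le_left.trans (hFU.trans ?_)
    rw [← sup_assoc, ← span_union, ← Set.image_union]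
    refine sup_le_sup_right (span_mono (Set.image_mono fun i hi => ?_)) U
    by_cases hφi : φ (E i) = 0
    · exact Or.inl ⟨hi, hφi⟩
    · exact Or.inr hφi

end WeaklyCompat

theorem stmt8_general {ι V : Type*} [AddCommGroup V] [Module ℂ V]
    (E : Module.Basis ι ℂ V) (Vs : Submodule ℂ (Module.Dual ℂ V))
    (hVs : Vs = Submodule.span ℂ (Set.range fun i => E.coord i))
    (F : Submodule ℂ V) (hF : WeaklyCompat E F)
    (φ : Module.Dual ℂ V) (hφ : φ ∈ Vs) (hFφ : ¬ F ≤ LinearMap.ker φ)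
    (v : V) (hv : v ∉ F) :
    WeaklyCompat E ((F ⊓ LinearMap.ker φ) ⊔ Submodule.span ℂ {v}) ∧
    ∃ U : Submodule ℂ V, FiniteDimensional ℂ ↥U ∧
      F ⊔ U = ((F ⊓ LinearMap.ker φ) ⊔ Submodule.span ℂ {v}) ⊔ U ∧
      Module.finrank ℂ ↥(F ⊓ U) =
        Module.finrank ℂ ↥(((F ⊓ LinearMap.ker φ) ⊔ Submodule.span ℂ {v}) ⊓ U) := by
  subst hVs
  obtain ⟨w, hwF, hφw⟩ : ∃ w ∈ F, φ w ≠ 0 := by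
    simpa [SetLike.le_def] using hFφ
  have hv0 : v ≠ 0 := fun h => hv (h ▸ F.zero_mem)
  have hw0 : w ≠ 0 := fun h => hφw (by simp [h])
  have hwF' : w ∉ F ⊓ LinearMap.ker φ ⊔ ℂ ∙ v := fun h => hφw <| by
    have hw : w ∈ F ⊓ (F ⊓ LinearMap.ker φ ⊔ ℂ ∙ v) := ⟨hwF, h⟩
    rw [inf_sup_span_singleton_eq_of_notMem inf_le_left hv] at hw
    exact hw.2
  refine ⟨(hF.inf_ker (E.finite_setOf_apply_ne_zero_of_mem_span_coord hφ)).sup_of_finiteDimensional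
    _, (ℂ ∙ v) ⊔ (ℂ ∙ w), inferInstance, ?_, ?_⟩
  · conv_lhs => rw [← inf_ker_sup_span_singleton_eq hwF hφw]
    simp only [sup_assoc, sup_left_comm, sup_idem, sup_left_idem]
  · have hFU : F ⊓ (ℂ ∙ v ⊔ ℂ ∙ w) = ℂ ∙ w := by
      rw [sup_comm]
      exact inf_sup_span_singleton_eq_of_notMem ((span_singleton_le_iff_mem _ _).2 hwF) hv
    rw [hFU, inf_sup_span_singleton_eq_of_notMem le_sup_right hwF', finrank_span_singleton hw0,
      finrank_span_singleton hv0]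

/-- Let `V_* ⊂ V^*` be spanned by the dual family of the basis `E`, let `F`
be a weakly `E`-compatible subspace, `φ ∈ V_*` with `F ⊄ ker φ`, and `v ∈ V \ F`.  Then
`F' := (F ∩ ker φ) ⊕ ℂv` is again weakly `E`-compatible and is `E`-commensurable with `F`:
there is a finite-dimensional subspace `U` with `F + U = F' + U` and
`dim (F ∩ U) = dim (F' ∩ U)`. -/
theorem stmt8 {ι V : Type*} [Countable ι] [AddCommGroup V] [Module ℂ V]
    (E : Module.Basis ι ℂ V) (Vs : Submodule ℂ (Module.Dual ℂ V))
    (hVs : Vs = Submodule.span ℂ (Set.range fun i => E.coord i))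
    (F : Submodule ℂ V) (hF : WeaklyCompat E F)
    (φ : Module.Dual ℂ V) (hφ : φ ∈ Vs) (hFφ : ¬ F ≤ LinearMap.ker φ)
    (v : V) (hv : v ∉ F) :
    WeaklyCompat E ((F ⊓ LinearMap.ker φ) ⊔ Submodule.span ℂ {v}) ∧
    ∃ U : Submodule ℂ V, FiniteDimensional ℂ ↥U ∧
      F ⊔ U = ((F ⊓ LinearMap.ker φ) ⊔ Submodule.span ℂ {v}) ⊔ U ∧
      Module.finrank ℂ ↥(F ⊓ U) =
        Module.finrank ℂ ↥(((F ⊓ LinearMap.ker φ) ⊔ Submodule.span ℂ {v}) ⊓ U) :=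
  stmt8_general E Vs hVs F hF φ hφ hFφ v hv
end

section
/- Let G be one of the ind-groups GL(∞), O(∞), Sp(∞), and let F₁, F₂ be subspaces of the natural representation V such that there exists a sequence {F^(n)}_{n≥0} of subspaces with F₁ ∩ F^(0) ⊊ F₁ ∩ F^(1) ⊊ ⋯ strictly increasing, and each F^(n) lies in the G-orbit of F₂ (under the natural action on subspaces). Then the subspaces F^(n) lie in pairwise distinct orbits of the stabilizer Stab_G(F₁). In particular Stab_G(F₁) has infinitely many orbits on the G-orbit of F₂. -/
/-!
An element `g` moving only finitely many vectors of the basis `E` fixes pointwise the span `W`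
of the remaining basis vectors, and `V ⧸ W` is finite-dimensional. So if `A ≤ g A`, then
`A ⊓ W = g A ⊓ W` (as `g` is the identity on `W`) and `A ⊔ W = g A ⊔ W` (by a dimension count
in `V ⧸ W`), whence `g A = A` by modularity. An element of `Stab_G(F₁)` carrying `F⁽ⁿ⁾` to
`F⁽ᵐ⁾` carries `F₁ ∩ F⁽ⁿ⁾` to `F₁ ∩ F⁽ᵐ⁾`; for `n < m` this would be a strict expansion.
-/

open Submodule

section FixedSubspace

variable {ι K V : Type*} [Field K] [AddCommGroup V] [Module K V]

theorem LinearEquiv.map_eq_of_le_map (e : V ≃ₗ[K] V) {p : Submodule K V} [FiniteDimensional K p]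
    (h : p ≤ p.map (e : V →ₗ[K] V)) : p.map (e : V →ₗ[K] V) = p :=
  (eq_of_le_of_finrank_eq h (e.finrank_map_eq p).symm).symm

theorem Module.Basis.finiteDimensional_quotient_span_image_compl (E : Module.Basis ι K V)
    {s : Set ι} (hs : s.Finite) : FiniteDimensional K (V ⧸ span K (E '' sᶜ)) := by
  have : FiniteDimensional K (span K (E '' s)) := FiniteDimensional.span_of_finite K (hs.image E)
  refine Module.Finite.of_surjective ((span K (E '' sᶜ)).mkQ ∘ₗ (span K (E '' s)).subtype) ?_
  rw [← LinearMap.range_eq_top, LinearMap.range_comp, range_subtype, map_mkQ_eq_top,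
    ← span_union, ← Set.image_union, Set.compl_union_self, Set.image_univ, E.span_eq]

theorem Submodule.map_eq_of_le_map_of_eqOn {W : Submodule K V} [FiniteDimensional K (V ⧸ W)]
    (g : V ≃ₗ[K] V) (hW : ∀ w ∈ W, g w = w) {A : Submodule K V}
    (hA : A ≤ A.map (g : V →ₗ[K] V)) : A.map (g : V →ₗ[K] V) = A := by
  have hgW : W.map (g : V →ₗ[K] V) = W := by
    refine le_antisymm ?_ fun w hw => ⟨w, hw, hW w hw⟩
    rintro _ ⟨w, hw, rfl⟩
    rwa [LinearEquiv.coe_coe, hW w hw]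
  have hinf : A.map (g : V →ₗ[K] V) ⊓ W ≤ A ⊓ W := by
    rintro _ ⟨⟨a, ha, rfl⟩, hw⟩
    have : a = g a := g.injective (hW _ hw).symm
    exact ⟨this ▸ ha, hw⟩
  have hquot : (A.map (g : V →ₗ[K] V)).map W.mkQ = A.map W.mkQ := by
    let e := Quotient.equiv W W g hgW
    have hcomm : (A.map (g : V →ₗ[K] V)).map W.mkQ = (A.map W.mkQ).map (e : V ⧸ W →ₗ[K] V ⧸ W) := by
      rw [← map_comp, ← map_comp]; rfl
    rw [hcomm]
    exact e.map_eq_of_le_map (hcomm ▸ map_mono hA)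
  have hsup : A.map (g : V →ₗ[K] V) ⊔ W ≤ A ⊔ W := by
    rw [sup_comm, ← comap_map_mkQ, hquot, comap_map_mkQ, sup_comm]
  exact (eq_of_le_of_inf_le_of_sup_le hA hinf hsup).symm

theorem Submodule.map_eq_of_le_map_of_finite (E : Module.Basis ι K V) (g : V ≃ₗ[K] V)
    (hg : {i | g (E i) ≠ E i}.Finite) {A : Submodule K V} (hA : A ≤ A.map (g : V →ₗ[K] V)) :
    A.map (g : V →ₗ[K] V) = A := by
  have := E.finiteDimensional_quotient_span_image_compl hg
  have hfix : span K (E '' {i | g (E i) ≠ E i}ᶜ) ≤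
      LinearMap.eqLocus (g : V →ₗ[K] V) LinearMap.id :=
    span_le.2 (by rintro _ ⟨i, hi, rfl⟩; simpa using hi)
  exact map_eq_of_le_map_of_eqOn g (fun w hw => hfix hw) hA

end FixedSubspace

section StabilizerOrbits

variable {R M : Type*} [Semiring R] [AddCommMonoid M] [Module R M]

def SameStabOrbit (G : Subgroup (M ≃ₗ[R] M)) (F W W' : Submodule R M) : Prop :=
  ∃ g ∈ G, F.map (g : M →ₗ[R] M) = F ∧ W.map (g : M →ₗ[R] M) = W'

variable {G : Subgroup (M ≃ₗ[R] M)} {F : Submodule R M}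

theorem sameStabOrbit_equivalence : Equivalence (SameStabOrbit G F) where
  refl W := ⟨1, G.one_mem, map_id F, map_id W⟩
  symm := by
    rintro W W' ⟨g, hg, hF, hW⟩
    exact ⟨g⁻¹, G.inv_mem hg, (map_symm_eq_iff g).2 hF, (map_symm_eq_iff g).2 hW⟩
  trans := by
    rintro W W' W'' ⟨g, hg, hF, hW⟩ ⟨g', hg', hF', hW'⟩
    refine ⟨g' * g, G.mul_mem hg' hg, ?_, ?_⟩
    · rw [LinearEquiv.coe_toLinearMap_mul, Module.End.mul_eq_comp, map_comp, hF, hF']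
    · rw [LinearEquiv.coe_toLinearMap_mul, Module.End.mul_eq_comp, map_comp, hW, hW']

theorem SameStabOrbit.exists_map_inf {W W' : Submodule R M} (h : SameStabOrbit G F W W') :
    ∃ g ∈ G, (F ⊓ W).map (g : M →ₗ[R] M) = F ⊓ W' := by
  obtain ⟨g, hg, hF, hW⟩ := h
  exact ⟨g, hg, by rw [map_inf _ g.injective, hF, hW]⟩

end StabilizerOrbits

theorem not_sameStabOrbit_of_inf_lt {ι K V : Type*} [Field K] [AddCommGroup V] [Module K V]
    (E : Module.Basis ι K V) {G : Subgroup (V ≃ₗ[K] V)}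
    (hG : ∀ g ∈ G, {i | g (E i) ≠ E i}.Finite) {F W W' : Submodule K V}
    (hlt : F ⊓ W < F ⊓ W') : ¬ SameStabOrbit G F W W' := fun h => by
  obtain ⟨g, hg, hmap⟩ := h.exists_map_inf
  have hfix := map_eq_of_le_map_of_finite E g (hG g hg) (hmap ▸ hlt.le)
  exact hlt.ne (hfix.symm.trans hmap)

/-- Let `G` be a subgroup of `GL(V)` every element of which fixes all but
finitely many vectors of a basis `E` (e.g. `G = GL(∞), O(∞), Sp(∞)` in an admissible basis).
If `{F⁽ⁿ⁾}` is a sequence of subspaces, each in the `G`-orbit of `F₂`, with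
`F₁ ∩ F⁽⁰⁾ ⊊ F₁ ∩ F⁽¹⁾ ⊊ ⋯` strictly increasing, then the `F⁽ⁿ⁾` lie in pairwise distinct
orbits of `Stab_G(F₁)`; in particular `Stab_G(F₁)` has infinitely many orbits on the
`G`-orbit of `F₂`. -/
theorem stmt12 {ι V : Type*} [AddCommGroup V] [Module ℂ V]
    (E : Module.Basis ι ℂ V) (G : Subgroup (V ≃ₗ[ℂ] V))
    (hG : ∀ g ∈ G, {i | g (E i) ≠ E i}.Finite)
    (F₁ F₂ : Submodule ℂ V) (Fs : ℕ → Submodule ℂ V)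
    (hmono : StrictMono fun n => F₁ ⊓ Fs n)
    (horbit : ∀ n, ∃ g ∈ G, Submodule.map (g : V →ₗ[ℂ] V) F₂ = Fs n) :
    (∀ n m : ℕ, n ≠ m →
      ¬ ∃ g ∈ G, Submodule.map (g : V →ₗ[ℂ] V) F₁ = F₁ ∧
        Submodule.map (g : V →ₗ[ℂ] V) (Fs n) = Fs m) ∧
    Infinite (Quot fun
        (W W' : {W : Submodule ℂ V // ∃ g ∈ G, Submodule.map (g : V →ₗ[ℂ] V) F₂ = W}) =>
        ∃ g ∈ G, Submodule.map (g : V →ₗ[ℂ] V) F₁ = F₁ ∧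
          Submodule.map (g : V →ₗ[ℂ] V) W.1 = W'.1) := by
  have hdistinct : ∀ n m : ℕ, n ≠ m → ¬ SameStabOrbit G F₁ (Fs n) (Fs m) := by
    intro n m hnm
    rcases hnm.lt_or_gt with hlt | hgt
    · exact not_sameStabOrbit_of_inf_lt E hG (hmono hlt)
    · exact fun h => not_sameStabOrbit_of_inf_lt E hG (hmono hgt) (sameStabOrbit_equivalence.symm h)
  refine ⟨hdistinct, Infinite.of_injective (fun n => Quot.mk _ ⟨Fs n, horbit n⟩) fun n m h => ?_⟩
  by_contra hnm
  exact hdistinct n m hnm ((sameStabOrbit_equivalence.comap Subtype.val).eqvGen_iff.1 (Quot.eq.1 h))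
end

section
/- Let M be a finite-dimensional complex vector space with a nondegenerate symmetric or symplectic bilinear form ω, and G(M,ω) the group of linear automorphisms preserving ω. Let I be a set with an involution i ↦ i*, and let {M_i}_{i∈I}, {M'_i}_{i∈I} be collections of subspaces with dim M_i = dim M'_i for all i, M_i^⊥ = M_{i*} and (M'_i)^⊥ = M'_{i*} for all i. If there exists g ∈ GL(M) with g(M_i) = M'_i for all i, then there exists h ∈ G(M,ω) with h(M_i) = M'_i for all i. -/
/-!
Let `g†` be the `ω`-adjoint of `g` and `φ = g† g`. Since `ω` is symmetric or alternating, `φ` is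
`ω`-self-adjoint, and the relations `M_i^⊥ = M_{i*}`, `(M'_i)^⊥ = M'_{i*}` make `g†` carry `M'_i`
back into `M_i`, so `φ` stabilises every `M_i`. As `φ` is invertible, its minimal polynomial does
not vanish at `0`, and over `ℂ` the class of `X` is a square modulo such a polynomial (Hensel's
lemma at each root, then the Chinese remainder theorem). Hence `φ = ψ²` with `ψ` a polynomial in
`φ`: `ψ` is self-adjoint and stabilises every `M_i`, so `h = g ψ⁻¹` is an isometry with
`h(M_i) = g(M_i) = M'_i`.
-/

open Polynomial

theorem dvd_sq_sub_of_dvd_sub {R : Type*} [CommRing R] {m p q f : R} (hpq : m ∣ p - q)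
    (hq : m ∣ q ^ 2 - f) : m ∣ p ^ 2 - f := by
  have : p ^ 2 - f = (p - q) * (p + q) + (q ^ 2 - f) := by ring
  rw [this]
  exact dvd_add (dvd_mul_of_dvd_left hpq _) hq

theorem IsCoprime.exists_sq_sub_dvd_mul {R : Type*} [CommRing R] {m n f : R}
    (hmn : IsCoprime m n) (hm : ∃ p, m ∣ p ^ 2 - f) (hn : ∃ q, n ∣ q ^ 2 - f) :
    ∃ r, m * n ∣ r ^ 2 - f := by
  obtain ⟨p, hp⟩ := hm
  obtain ⟨q, hq⟩ := hn
  obtain ⟨u, v, huv⟩ := id hmn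
  -- the Chinese remainder witness: `r ≡ p [m]` and `r ≡ q [n]`
  refine ⟨p * (v * n) + q * (u * m), hmn.mul_dvd (dvd_sq_sub_of_dvd_sub ⟨(q - p) * u, ?_⟩ hp)
    (dvd_sq_sub_of_dvd_sub ⟨(p - q) * v, ?_⟩ hq)⟩
  · linear_combination p * huv
  · linear_combination q * huv

namespace Polynomial

variable {K : Type*} [Field K]

theorem exists_sq_sub_X_dvd_pow_succ [NeZero (2 : K)] {a : K} (ha : a ≠ 0) {k : ℕ} (hk : k ≠ 0)
    {p : K[X]} (hp : (X - C a) ^ k ∣ p ^ 2 - X) :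
    ∃ q : K[X], (X - C a) ^ (k + 1) ∣ q ^ 2 - X := by
  obtain ⟨r, hr⟩ := hp
  have hpa : p.eval a ^ 2 = a := by
    simpa [sub_eq_zero, zero_pow hk] using congrArg (eval a) hr
  have hpa0 : p.eval a ≠ 0 := fun h => ha (by rw [← hpa, h, zero_pow two_ne_zero])
  obtain ⟨c, hc⟩ : ∃ c : K, r.eval a + 2 * c * p.eval a = 0 :=
    ⟨-r.eval a / (2 * p.eval a), by field_simp; ring⟩
  have hroot : X - C a ∣ r + 2 * C c * p := by
    rw [dvd_iff_isRoot, IsRoot, eval_add, eval_mul, eval_mul, eval_C, eval_ofNat, hc]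
  refine ⟨p + C c * (X - C a) ^ k, ?_⟩
  have key : (p + C c * (X - C a) ^ k) ^ 2 - X
      = (X - C a) ^ k * (r + 2 * C c * p) + C c ^ 2 * (X - C a) ^ (2 * k) := by
    linear_combination hr
  rw [key]
  exact dvd_add (by rw [pow_succ]; exact mul_dvd_mul_left _ hroot)
    (dvd_mul_of_dvd_right (pow_dvd_pow _ (by omega)) _)

theorem exists_sq_sub_X_dvd_pow [IsAlgClosed K] [NeZero (2 : K)] {a : K} (ha : a ≠ 0) (k : ℕ) :
    ∃ q : K[X], (X - C a) ^ k ∣ q ^ 2 - X := by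
  rcases Nat.eq_zero_or_pos k with rfl | hk
  · exact ⟨0, by simp⟩
  induction k, hk using Nat.le_induction with
  | base =>
    obtain ⟨b, hb⟩ := IsAlgClosed.exists_pow_nat_eq a two_pos
    exact ⟨C b, ⟨-1, by rw [← C_pow, hb]; ring⟩⟩
  | succ k hk ih =>
    obtain ⟨p, hp⟩ := ih
    exact exists_sq_sub_X_dvd_pow_succ ha (by omega) hp

theorem exists_sq_sub_X_dvd [IsAlgClosed K] [NeZero (2 : K)] (m : K[X]) (hm : m.eval 0 ≠ 0) :
    ∃ p : K[X], m ∣ p ^ 2 - X := by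
  induction m using UniqueFactorizationMonoid.induction_on_coprime with
  | h0 => simp at hm
  | h1 hu => exact ⟨0, hu.dvd⟩
  | hpr i hprime =>
    rcases Nat.eq_zero_or_pos i with rfl | hi
    · exact ⟨0, by simp⟩
    obtain ⟨b, hb⟩ := IsAlgClosed.exists_root _ (degree_pos_of_irreducible hprime.irreducible).ne'
    have hassoc : Associated ((X - C b) ^ i) (_ ^ i) :=
      ((irreducible_X_sub_C b).associated_of_dvd hprime.irreducible (dvd_iff_isRoot.mpr hb)).pow_pow
    have hb0 : b ≠ 0 := by
      rintro rfl
      exact hm (by rw [eval_pow, hb.eq_zero, zero_pow hi.ne'])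
    simpa only [← hassoc.dvd_iff_dvd_left] using exists_sq_sub_X_dvd_pow hb0 i
  | hcp hrel hx hy =>
    rw [eval_mul] at hm
    exact hrel.isCoprime.exists_sq_sub_dvd_mul (hx (left_ne_zero_of_mul hm))
      (hy (right_ne_zero_of_mul hm))

end Polynomial

section FiniteDimensional

variable {K M : Type*} [Field K] [AddCommGroup M] [Module K M] [FiniteDimensional K M]

theorem Module.End.exists_aeval_sq_eq [IsAlgClosed K] [NeZero (2 : K)] {φ : Module.End K M}
    (hφ : Function.Injective φ) : ∃ p : K[X], aeval φ p ^ 2 = φ := by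
  have h0 : ¬ (minpoly K φ).IsRoot 0 :=
    (LinearMap.not_hasEigenvalue_zero_tfae φ).out 1 5 |>.mpr fun m hm => hφ (by rw [hm, map_zero])
  obtain ⟨p, hp⟩ := exists_sq_sub_X_dvd (minpoly K φ) h0
  refine ⟨p, sub_eq_zero.mp ?_⟩
  simpa using minpoly.dvd_iff.mp hp

theorem Submodule.map_eq_self_of_injective {f : Module.End K M} (hf : Function.Injective f)
    {W : Submodule K M} (hW : W ≤ W.comap f) : W.map f = W :=
  Submodule.eq_of_le_of_finrank_eq (Submodule.map_le_iff_le_comap.mpr hW)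
    (LinearEquiv.finrank_map_eq (LinearEquiv.ofInjectiveEndo f hf) W)

end FiniteDimensional

namespace LinearMap

section CommRing

variable {R M : Type*} [CommRing R] [AddCommGroup M] [Module R M] {ω : LinearMap.BilinForm R M}

theorem IsAdjointPair.symm (hω : ω.IsSymm ∨ ω.IsAlt) {f g : M → M}
    (h : IsAdjointPair ω ω f g) : IsAdjointPair ω ω g f := by
  intro x y
  rcases hω with hω | hω
  · rw [hω.eq, ← h, hω.eq]
  · rw [← hω.neg_eq, ← h, hω.neg_eq]

theorem IsAdjointPair.orthogonal_le_comap {f g : Module.End R M} (h : IsAdjointPair ω ω f g)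
    {W W' : Submodule R M} (hW : W ≤ W'.comap f) : ω.orthogonal W' ≤ (ω.orthogonal W).comap g :=
  fun x hx w hw => by rw [← h, hx _ (hW hw)]

theorem IsSelfAdjoint.aeval {φ : Module.End R M} (hφ : LinearMap.IsSelfAdjoint ω φ) (p : R[X]) :
    LinearMap.IsSelfAdjoint ω (aeval φ p) := by
  induction p using Polynomial.induction_on with
  | C a => intro x y; simp
  | add p q hp hq => rw [map_add]; exact hp.add hq
  | monomial n a hp =>
    have hcomm : Commute (Polynomial.aeval φ (C a * X ^ n)) φ := by
      simpa only [aeval_X] using (Commute.all (C a * X ^ n) X).map (Polynomial.aeval (R := R) φ)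
    rw [pow_succ, ← mul_assoc, map_mul, aeval_X]
    simpa only [LinearMap.IsSelfAdjoint, hcomm.eq] using hp.mul hφ

end CommRing

variable {K M : Type*} [Field K] [AddCommGroup M] [Module K M] [FiniteDimensional K M]
  {ω : LinearMap.BilinForm K M}

theorem exists_isOrthogonal_comp_aeval [IsAlgClosed K] [NeZero (2 : K)]
    (hnd : ω.Nondegenerate) (hω : ω.IsSymm ∨ ω.IsAlt) (g : M ≃ₗ[K] M) :
    ∃ (h : M ≃ₗ[K] M) (p : K[X]), IsOrthogonal ω h ∧
      (g : M →ₗ[K] M) = h ∘ₗ aeval (ω.leftAdjointOfNondegenerate hnd g ∘ₗ g) p := by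
  set a := ω.leftAdjointOfNondegenerate hnd g
  have ha : IsAdjointPair ω ω a g := ω.isAdjointPairLeftAdjointOfNondegenerate hnd g
  set φ : Module.End K M := a ∘ₗ g
  have hφ : LinearMap.IsSelfAdjoint ω φ := (ha.symm hω).comp ha
  have ha_inj : Function.Injective a := by
    refine (injective_iff_map_eq_zero a).mpr fun x hx => hnd.1 x fun y => ?_
    rw [← g.apply_symm_apply y, ← ha, hx, map_zero, zero_apply]
  have hφ_inj : Function.Injective φ := ha_inj.comp g.injective
  obtain ⟨p, hp⟩ := Module.End.exists_aeval_sq_eq hφ_inj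
  set ψ := Polynomial.aeval φ p
  have hψ : LinearMap.IsSelfAdjoint ω ψ := hφ.aeval p
  have hψ_inj : Function.Injective ψ := by
    refine Function.Injective.of_comp (f := ψ) ?_
    rwa [← Module.End.coe_mul, ← sq, hp]
  set e := LinearEquiv.ofInjectiveEndo ψ hψ_inj
  refine ⟨e.symm.trans g, p, fun x y => ?_, ?_⟩
  · calc ω (g (e.symm x)) (g (e.symm y)) = ω (φ (e.symm x)) (e.symm y) := (ha _ _).symm
      _ = ω (ψ (ψ (e.symm x))) (e.symm y) := by rw [← hp]; rfl
      _ = ω (e (e.symm x)) (e (e.symm y)) := hψ _ _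
      _ = ω x y := by simp only [LinearEquiv.apply_symm_apply]
  · ext x
    exact congrArg g (e.symm_apply_apply x).symm

end LinearMap

theorem stmt13_general {M : Type*} [AddCommGroup M] [Module ℂ M] [FiniteDimensional ℂ M]
    (ω : LinearMap.BilinForm ℂ M) (hnd : ω.Nondegenerate) (hsa : ω.IsSymm ∨ ω.IsAlt)
    {I : Type*} (st : I → I) (hst : ∀ i, st (st i) = i)
    (Mi Mi' : I → Submodule ℂ M)
    (hperp : ∀ i, ω.orthogonal (Mi i) = Mi (st i))
    (hperp' : ∀ i, ω.orthogonal (Mi' i) = Mi' (st i))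
    (hg : ∃ g : M ≃ₗ[ℂ] M, ∀ i, Submodule.map (g : M →ₗ[ℂ] M) (Mi i) = Mi' i) :
    ∃ h : M ≃ₗ[ℂ] M, (∀ x y, ω (h x) (h y) = ω x y) ∧
      ∀ i, Submodule.map (h : M →ₗ[ℂ] M) (Mi i) = Mi' i := by
  obtain ⟨g, hg⟩ := hg
  obtain ⟨h, p, hh, hgh⟩ := LinearMap.exists_isOrthogonal_comp_aeval hnd hsa g
  set a := ω.leftAdjointOfNondegenerate hnd g
  set ψ := Polynomial.aeval (a ∘ₗ (g : M →ₗ[ℂ] M)) p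
  have hg_le : ∀ i, Mi i ≤ (Mi' i).comap (g : M →ₗ[ℂ] M) := fun i =>
    Submodule.map_le_iff_le_comap.mp (hg i).le
  have ha_le : ∀ i, Mi' i ≤ (Mi i).comap a := fun i => by
    simpa only [hperp, hperp', hst] using
      ((ω.isAdjointPairLeftAdjointOfNondegenerate hnd g).symm hsa).orthogonal_le_comap
        (hg_le (st i))
  have hψ_inj : Function.Injective ψ := by
    have hinj : Function.Injective ((h : M →ₗ[ℂ] M) ∘ₗ ψ) := by
      rw [← hgh]
      exact g.injective
    exact Function.Injective.of_comp (f := h) hinj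
  have hψ : ∀ i, (Mi i).map ψ = Mi i := fun i =>
    Submodule.map_eq_self_of_injective hψ_inj fun x hx =>
      Polynomial.aeval_apply_smul_mem_of_le_comap hx p _
        ((hg_le i).trans (Submodule.comap_mono (ha_le i)))
  refine ⟨h, hh, fun i => ?_⟩
  rw [← hg i, hgh, Submodule.map_comp, hψ i]

/-- Let `M` be a finite-dimensional complex vector space with a
nondegenerate symmetric or alternating bilinear form `ω`.  Given an involution `i ↦ i*` of an
index set `I` and two collections of subspaces `{M_i}`, `{M'_i}` with `dim M_i = dim M'_i`,
`M_i^⊥ = M_{i*}`, `(M'_i)^⊥ = M'_{i*}`, if some `g ∈ GL(M)` maps `M_i` onto `M'_i` for every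
`i`, then some isometry `h ∈ G(M, ω)` does so. -/
theorem stmt13 {M : Type*} [AddCommGroup M] [Module ℂ M] [FiniteDimensional ℂ M]
    (ω : LinearMap.BilinForm ℂ M) (hnd : ω.Nondegenerate) (hsa : ω.IsSymm ∨ ω.IsAlt)
    {I : Type*} (st : I → I) (hst : ∀ i, st (st i) = i)
    (Mi Mi' : I → Submodule ℂ M)
    (hdim : ∀ i, Module.finrank ℂ (Mi i) = Module.finrank ℂ (Mi' i))
    (hperp : ∀ i, ω.orthogonal (Mi i) = Mi (st i))
    (hperp' : ∀ i, ω.orthogonal (Mi' i) = Mi' (st i))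
    (hg : ∃ g : M ≃ₗ[ℂ] M, ∀ i, Submodule.map (g : M →ₗ[ℂ] M) (Mi i) = Mi' i) :
    ∃ h : M ≃ₗ[ℂ] M, (∀ x y, ω (h x) (h y) = ω x y) ∧
      ∀ i, Submodule.map (h : M →ₗ[ℂ] M) (Mi i) = Mi' i :=
  stmt13_general ω hnd hsa st hst Mi Mi' hperp hperp' hg
end

section
/- Let N be a finite-dimensional complex vector space, M a hyperplane, L a complementary line with basis vector e, and let g ∈ GL(N) with g(L) ≠ L; set K := L + g(L) (2-dimensional). Suppose {M_i}_{i∈I₀} are subspaces of M with g(M_i) ⊂ M for all i ∈ I₀, M₀ := Σ_{i∈I₀} M_i satisfies g(M₀) = M₀ and K ∩ M₀ = 0. Then there exists η ∈ GL(N) such that η restricted to M₀ is the identity, η(g(e)) ∈ L \ {0}, η(K) = K, and N = K + ker(η − id_N); consequently η fixes every subspace of N containing K whose intersection with a complement of K lies in ker(η − id). -/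
/-!
Since `K ∩ M₀ = 0`, the subspace `M₀` enlarges to a complement `C` of `K = span {e, g e}`.
Let `η` swap the basis vectors `e`, `g e` of `K` and fix `C`. Then `η − id` vanishes on `C`,
so its range lies in `K`, and every subspace `W ⊇ K` satisfies `η w = w + (η − id) w ∈ W`.
-/

open Submodule

section Ring

variable {R V ι : Type*} [Ring R] [AddCommGroup V] [Module R V]

theorem LinearEquiv.exists_extend_of_isCompl {K C : Submodule R V} (h : IsCompl K C)
    (φ : K ≃ₗ[R] K) :
    ∃ η : V ≃ₗ[R] V, (∀ x : K, η x = φ x) ∧ ∀ x : C, η x = x := by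
  let P := prodEquivOfIsCompl K C h
  refine ⟨P.symm.trans ((φ.prodCongr (LinearEquiv.refl R C)).trans P), fun x => ?_, fun x => ?_⟩
    <;> simp [P]

theorem LinearIndependent.exists_linearEquiv_perm {v : ι → V} (hv : LinearIndependent R v)
    (σ : Equiv.Perm ι) {C : Submodule R V} (hC : IsCompl (span R (Set.range v)) C) :
    ∃ η : V ≃ₗ[R] V, (∀ i, η (v i) = v (σ i)) ∧ ∀ x ∈ C, η x = x := by
  let b := Module.Basis.span hv
  obtain ⟨η, hηK, hηC⟩ := LinearEquiv.exists_extend_of_isCompl hC (b.equiv b σ)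
  refine ⟨η, fun i => ?_, fun x hx => hηC ⟨x, hx⟩⟩
  have h := hηK (b i)
  rw [b.equiv_apply] at h
  simpa [b] using h

theorem LinearEquiv.map_span_range_eq {v : ι → V} (η : V ≃ₗ[R] V) (σ : Equiv.Perm ι)
    (hη : ∀ i, η (v i) = v (σ i)) :
    (span R (Set.range v)).map (η : V →ₗ[R] V) = span R (Set.range v) := by
  rw [map_span, ← Set.range_comp, show ⇑(η : V →ₗ[R] V) ∘ v = v ∘ σ from funext hη,
    EquivLike.range_comp]

theorem LinearMap.range_sub_id_le {f : V →ₗ[R] V} {K : Submodule R V} (hfK : K.map f ≤ K)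
    (hK : K ⊔ ker (f - id) = ⊤) : range (f - id) ≤ K := by
  rintro _ ⟨x, rfl⟩
  obtain ⟨k, hk, c, hc, rfl⟩ := mem_sup.1 (hK ▸ mem_top : x ∈ K ⊔ ker (f - id))
  rw [map_add, mem_ker.1 hc, add_zero, sub_apply, id_apply]
  exact K.sub_mem (hfK ⟨k, hk, rfl⟩) hk

theorem LinearEquiv.map_eq_of_range_sub_id_le (η : V ≃ₗ[R] V) {W : Submodule R V}
    (h : LinearMap.range ((η : V →ₗ[R] V) - LinearMap.id) ≤ W) :
    W.map (η : V →ₗ[R] V) = W := by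
  have hW : ∀ x, η x - x ∈ W := fun x => h ⟨x, rfl⟩
  refine le_antisymm ?_ fun w hw => ⟨η.symm w, ?_, by simp⟩
  · rintro _ ⟨w, hw, rfl⟩
    simpa using W.add_mem (hW w) hw
  · simpa using W.sub_mem hw (hW (η.symm w))

end Ring

theorem linearIndependent_pair_of_span_singleton_ne {K V : Type*} [DivisionRing K]
    [AddCommGroup V] [Module K V] {x y : V} (hx : x ≠ 0) (hy : y ≠ 0)
    (hxy : span K {y} ≠ span K {x}) : LinearIndependent K ![x, y] := by
  refine (LinearIndependent.pair_iff' hx).2 fun a hay => hxy ?_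
  have ha : a ≠ 0 := by rintro rfl; exact hy (by simp [← hay])
  rw [← hay, span_singleton_smul_eq (isUnit_iff_ne_zero.2 ha)]

theorem stmt14_general {N : Type*} [AddCommGroup N] [Module ℂ N]
    (L : Submodule ℂ N)
    (e : N) (he : e ≠ 0) (heL : L = Submodule.span ℂ {e})
    (g : N ≃ₗ[ℂ] N) (hgL : Submodule.map (g : N →ₗ[ℂ] N) L ≠ L)
    {I₀ : Type*} (Mi : I₀ → Submodule ℂ N)
    (hKM₀ : (L ⊔ Submodule.map (g : N →ₗ[ℂ] N) L) ⊓ (⨆ i, Mi i) = ⊥) :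
    ∃ η : N ≃ₗ[ℂ] N,
      (∀ x ∈ ⨆ i, Mi i, η x = x) ∧
      (η (g e) ∈ L ∧ η (g e) ≠ 0) ∧
      Submodule.map (η : N →ₗ[ℂ] N) (L ⊔ Submodule.map (g : N →ₗ[ℂ] N) L) =
        L ⊔ Submodule.map (g : N →ₗ[ℂ] N) L ∧
      (L ⊔ Submodule.map (g : N →ₗ[ℂ] N) L) ⊔
        LinearMap.ker ((η : N →ₗ[ℂ] N) - LinearMap.id) = ⊤ ∧
      ∀ W : Submodule ℂ N, (L ⊔ Submodule.map (g : N →ₗ[ℂ] N) L) ≤ W →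
        Submodule.map (η : N →ₗ[ℂ] N) W = W := by
  have hgLe : L.map (g : N →ₗ[ℂ] N) = span ℂ {g e} := by
    rw [heL, map_span, Set.image_singleton, LinearEquiv.coe_coe]
  have hli : LinearIndependent ℂ ![e, g e] :=
    linearIndependent_pair_of_span_singleton_ne he (g.map_ne_zero_iff.2 he)
      (by rwa [← hgLe, ← heL])
  have hK : L ⊔ L.map (g : N →ₗ[ℂ] N) = span ℂ (Set.range ![e, g e]) := by
    rw [Matrix.range_cons_cons_empty, ← Set.singleton_union, span_union, ← heL, hgLe]
  obtain ⟨C, hM₀C, hC⟩ := (disjoint_iff.2 hKM₀).symm.exists_isCompl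
  rw [hK] at hC ⊢
  obtain ⟨η, hηv, hηC⟩ := hli.exists_linearEquiv_perm (Equiv.swap 0 1) hC.symm
  have hηK := η.map_span_range_eq _ hηv
  have hker :
      span ℂ (Set.range ![e, g e]) ⊔ LinearMap.ker ((η : N →ₗ[ℂ] N) - LinearMap.id) = ⊤ :=
    eq_top_iff.2 <| hC.symm.sup_eq_top.ge.trans <|
      sup_le_sup_left (fun x hx => by simp [hηC x hx]) _
  have hηge : η (g e) = e := by simpa using hηv 1
  refine ⟨η, fun x hx => hηC x (hM₀C hx), ⟨?_, by rwa [hηge]⟩, hηK, hker, fun W hKW => ?_⟩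
  · rw [hηge, heL]
    exact mem_span_singleton_self e
  · exact η.map_eq_of_range_sub_id_le ((LinearMap.range_sub_id_le hηK.le hker).trans hKW)

/-- Case 1 of the key linear-algebra lemma.  Let `N` be finite-dimensional,
`M` a hyperplane with complementary line `L = ℂe`, `g ∈ GL(N)` with `g(L) ≠ L`, and set
`K := L + g(L)`.  Suppose `{M_i}_{i∈I₀}` are subspaces of `M` with `g(M_i) ⊂ M`, and
`M₀ := Σ_i M_i` satisfies `g(M₀) = M₀` and `K ∩ M₀ = 0`.  Then there is `η ∈ GL(N)` which is
the identity on `M₀`, maps `g(e)` into `L \ {0}`, preserves `K`, satisfies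
`N = K + ker(η − id)`, and consequently fixes every subspace of `N` containing `K`. -/
theorem stmt14 {N : Type*} [AddCommGroup N] [Module ℂ N] [FiniteDimensional ℂ N]
    (M L : Submodule ℂ N) (hcompl : IsCompl M L)
    (e : N) (he : e ≠ 0) (heL : L = Submodule.span ℂ {e})
    (g : N ≃ₗ[ℂ] N) (hgL : Submodule.map (g : N →ₗ[ℂ] N) L ≠ L)
    {I₀ : Type*} (Mi : I₀ → Submodule ℂ N) (hMi : ∀ i, Mi i ≤ M)
    (hgMi : ∀ i, Submodule.map (g : N →ₗ[ℂ] N) (Mi i) ≤ M)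
    (hM₀ : Submodule.map (g : N →ₗ[ℂ] N) (⨆ i, Mi i) = ⨆ i, Mi i)
    (hKM₀ : (L ⊔ Submodule.map (g : N →ₗ[ℂ] N) L) ⊓ (⨆ i, Mi i) = ⊥) :
    ∃ η : N ≃ₗ[ℂ] N,
      (∀ x ∈ ⨆ i, Mi i, η x = x) ∧
      (η (g e) ∈ L ∧ η (g e) ≠ 0) ∧
      Submodule.map (η : N →ₗ[ℂ] N) (L ⊔ Submodule.map (g : N →ₗ[ℂ] N) L) =
        L ⊔ Submodule.map (g : N →ₗ[ℂ] N) L ∧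
      (L ⊔ Submodule.map (g : N →ₗ[ℂ] N) L) ⊔
        LinearMap.ker ((η : N →ₗ[ℂ] N) - LinearMap.id) = ⊤ ∧
      ∀ W : Submodule ℂ N, (L ⊔ Submodule.map (g : N →ₗ[ℂ] N) L) ≤ W →
        Submodule.map (η : N →ₗ[ℂ] N) W = W :=
  stmt14_general L e he heL g hgL Mi hKM₀
end

section
/- Let G be the ind-group GL(∞) (union of GL_n via standard embeddings) acting on the ind-variety X = lim X(n), where X(n) ↪ X(n+1) are the embeddings of products of partial flag varieties induced by adding one basis vector e (each flag component is extended either unchanged or by adding e to each subspace from some index on). If two points F, F' ∈ X(n) have images in X(n+1) lying in the same GL(span E_{n+1})-orbit, then F, F' lie in the same GL(span E_n)-orbit. Consequently the induced map of orbit sets X(n)/G(n) → X(n+1)/G(n+1) is injective. -/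
/-!
Let `π : N → M` be the projection along `K ∙ e`. If `g⁻¹ e ∉ M`, then `π ∘ g` restricted to `M`
is injective, hence an automorphism of `M`; it carries each `F i` into `F' i` (adding `e` is
killed by `π`), and the two have the same dimension, so it carries `F i` onto `F' i`. If instead
`g⁻¹ e ∈ M`, then `g(M)` contains `e`, and composing `g` with the transvection
`x ↦ x + f x • u`, where `f` is the coordinate of `e` and `u` the `M`-component of `g e`, moves
`e` out of the image of `M` without disturbing any of the target subspaces: it fixes `M`
pointwise, and `u` lies in every `F' i` whose lift contains `e`.
-/

open Submodule Module

section

variable {K N : Type*} [Field K] [AddCommGroup N] [Module K N]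

def MapsLiftTo (M : Submodule K N) (e : N) (g : N ≃ₗ[K] N) (P Q : Submodule K M) : Prop :=
  (P.map M.subtype).map (g : N →ₗ[K] N) = Q.map M.subtype ∨
    (P.map M.subtype ⊔ K ∙ e).map (g : N →ₗ[K] N) = Q.map M.subtype ⊔ K ∙ e

variable {M : Submodule K N} {e : N}

theorem map_projectionOnto_map_subtype_sup_span_singleton (hc : IsCompl M (K ∙ e))
    (Q : Submodule K M) : (Q.map M.subtype ⊔ K ∙ e).map (M.projectionOnto _ hc) = Q := by
  rw [Submodule.map_sup, ← map_comp, projectionOnto_comp_subtype, map_id,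
    LinearMap.le_ker_iff_map.mp (ker_projectionOnto hc).ge, sup_bot_eq]

theorem LinearEquiv.map_eq_of_map_le [FiniteDimensional K N] (f : N ≃ₗ[K] N) {W : Submodule K N}
    (hW : W.map (f : N →ₗ[K] N) ≤ W) : W.map (f : N →ₗ[K] N) = W :=
  eq_of_le_of_finrank_eq hW (f.finrank_map_eq W)

namespace MapsLiftTo

variable {g : N ≃ₗ[K] N} {P Q : Submodule K M}

theorem finrank_eq [FiniteDimensional K N] (he : e ∉ M) (h : MapsLiftTo M e g P Q) :
    finrank K P = finrank K Q := by
  have hnotMem (R : Submodule K M) : e ∉ R.map M.subtype := fun h => he (map_subtype_le M R h)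
  rcases h with h | h <;> have := congr_arg (fun W : Submodule K N => finrank K W) h
  · simpa [finrank_map_subtype_eq, g.finrank_map_eq] using this
  · simp only [g.finrank_map_eq, finrank_sup_span_singleton (hnotMem _),
      finrank_map_subtype_eq] at this
    omega

theorem map_le (h : MapsLiftTo M e g P Q) :
    (P.map M.subtype).map (g : N →ₗ[K] N) ≤ Q.map M.subtype ⊔ K ∙ e := by
  rcases h with h | h
  · exact h ▸ le_sup_left
  · exact h ▸ map_mono le_sup_left

theorem trans_transvection [FiniteDimensional K N] (hc : IsCompl M (K ∙ e)) {f : Dual K N}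
    (hfM : M ≤ LinearMap.ker f) (h : MapsLiftTo M e g P Q) :
    MapsLiftTo M e (g.trans (LinearEquiv.transvection (hfM (projection_apply_mem hc (g e)))))
      P Q := by
  have hfu := hfM (projection_apply_mem hc (g e))
  set τ := LinearEquiv.transvection hfu
  have hmap (W : Submodule K N) : W.map (g.trans τ : N →ₗ[K] N) =
      (W.map (g : N →ₗ[K] N)).map (τ : N →ₗ[K] N) := by
    rw [LinearEquiv.coe_trans, map_comp]
  rcases h with h | h
  · left
    rw [hmap, h]
    exact mem_stabilizer_submodule_iff_map_eq.mp
      (LinearEquiv.mem_stabilizer_submodule_of_le_fixedSubmodule ((map_subtype_le M Q).trans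
        (hfM.trans (LinearEquiv.ker_le_fixedSubmodule_transvection hfu))))
  · right
    rw [hmap, h]
    have hge : g e ∈ Q.map M.subtype ⊔ K ∙ e :=
      h ▸ mem_map_of_mem (mem_sup_right (mem_span_singleton_self e))
    have huQ : M.projection (K ∙ e) hc (g e) ∈ Q.map M.subtype := by
      refine ⟨M.projectionOnto _ hc (g e), ?_, coe_projectionOnto_apply hc (g e)⟩
      rw [← map_projectionOnto_map_subtype_sup_span_singleton hc Q]
      exact mem_map_of_mem hge
    refine τ.map_eq_of_map_le ?_
    rintro _ ⟨x, hx, rfl⟩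
    exact add_mem hx (smul_mem _ _ (mem_sup_left huQ))

end MapsLiftTo

theorem injective_projectionOnto_comp (hc : IsCompl M (K ∙ e)) {g : N ≃ₗ[K] N}
    (hg : g.symm e ∉ M) :
    Function.Injective (M.projectionOnto _ hc ∘ₗ (g : N →ₗ[K] N) ∘ₗ M.subtype) := by
  have hge0 : g.symm e ≠ 0 := fun h => hg (h ▸ M.zero_mem)
  refine (injective_iff_map_eq_zero _).mpr fun x hx => ?_
  obtain ⟨c, hgx⟩ := mem_span_singleton.mp ((projectionOnto_apply_eq_zero_iff hc).mp hx)
  have hx' : (x : N) ∈ K ∙ g.symm e :=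
    mem_span_singleton.mpr ⟨c, by rw [← map_smul, hgx]; exact g.symm_apply_apply x⟩
  simpa using ((disjoint_span_singleton' hge0).mpr hg).le_bot ⟨x.2, hx'⟩

theorem exists_linearEquiv_map_eq [FiniteDimensional K N] (hc : IsCompl M (K ∙ e))
    {g : N ≃ₗ[K] N} (hg : g.symm e ∉ M) :
    ∃ h : M ≃ₗ[K] M, ∀ P Q, MapsLiftTo M e g P Q → P.map (h : M →ₗ[K] M) = Q := by
  have he : e ∉ M := fun he => hg <| by
    simp [show e = 0 by simpa using hc.disjoint.le_bot ⟨he, mem_span_singleton_self e⟩]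
  refine ⟨LinearEquiv.ofInjectiveEndo _ (injective_projectionOnto_comp hc hg), fun P Q hPQ => ?_⟩
  refine eq_of_le_of_finrank_eq ?_ ((LinearEquiv.finrank_map_eq _ P).trans (hPQ.finrank_eq he))
  rw [← map_projectionOnto_map_subtype_sup_span_singleton hc Q]
  change P.map (M.projectionOnto _ hc ∘ₗ (g : N →ₗ[K] N) ∘ₗ M.subtype) ≤ _
  rw [map_comp, map_comp]
  exact map_mono hPQ.map_le

theorem exists_mapsLiftTo_symm_apply_notMem [FiniteDimensional K N] (he0 : e ≠ 0)
    (hc : IsCompl M (K ∙ e)) (g : N ≃ₗ[K] N) :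
    ∃ g' : N ≃ₗ[K] N, g'.symm e ∉ M ∧ ∀ P Q, MapsLiftTo M e g P Q → MapsLiftTo M e g' P Q := by
  by_cases hg : g.symm e ∉ M
  · exact ⟨g, hg, fun _ _ => id⟩
  rw [not_not] at hg
  let f : Dual K N :=
    (LinearEquiv.coord K N e he0 : (K ∙ e) →ₗ[K] K) ∘ₗ (K ∙ e).projectionOnto M hc.symm
  have hfM : M ≤ LinearMap.ker f := fun x hx => by simpa [f] using hx
  have hfe : f e = 1 := by
    simp [f, projectionOnto_apply_of_mem_left hc.symm (mem_span_singleton_self e),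
      LinearEquiv.coord_self]
  let u := M.projection (K ∙ e) hc (g e)
  have hfu : f u = 0 := hfM (projection_apply_mem hc (g e))
  refine ⟨g.trans (LinearEquiv.transvection hfu), fun h => ?_,
    fun P Q => MapsLiftTo.trans_transvection hc hfM⟩
  have heW : e ∈ M.map (g : N →ₗ[K] N) := (mem_map_equiv M).mpr hg
  have hτe : (LinearEquiv.transvection hfu).symm e = e - u := by
    rw [LinearEquiv.symm_apply_eq, LinearEquiv.transvection.apply, map_sub, hfe, hfu, sub_zero,
      one_smul, sub_add_cancel]
  rw [LinearEquiv.symm_trans_apply, hτe] at h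
  have huW : u ∈ M.map (g : N →ₗ[K] N) := by
    simpa using sub_mem heW ((mem_map_equiv M).mpr h)
  have hgeW : g e ∈ M.map (g : N →ₗ[K] N) := by
    have := add_mem ((span_singleton_le_iff_mem _ _).mpr heW (sub_projection_mem hc (g e))) huW
    rwa [sub_add_cancel] at this
  have heM : e ∈ M := by simpa using (mem_map_equiv M).mp hgeW
  exact he0 (by simpa using hc.disjoint.le_bot ⟨heM, mem_span_singleton_self e⟩)

end

/-- key lemma in type A.  Let `M = span Eₙ` be a hyperplane of the
finite-dimensional space `N = span Eₙ₊₁ = M ⊕ ℂe`.  A point of `X(n)` is a collection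
`{F_i}` of subspaces of `M`; its image in `X(n+1)` is the collection with `i`-th member
`F_i` for `i ∈ I₀` and `F_i ⊕ ℂe` for `i ∉ I₀`.  If the images of two points `F, F'` lie in
the same `GL(N)`-orbit, then `F, F'` lie in the same `GL(M)`-orbit; consequently the induced
map of orbit sets `X(n)/G(n) → X(n+1)/G(n+1)` is injective. -/
theorem stmt15 {N : Type*} [AddCommGroup N] [Module ℂ N] [FiniteDimensional ℂ N]
    (M : Submodule ℂ N) (e : N) (he : e ∉ M) (hspan : M ⊔ Submodule.span ℂ {e} = ⊤)
    {I : Type*} (I₀ : Set I) (F F' : I → Submodule ℂ ↥M)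
    (hg : ∃ g : N ≃ₗ[ℂ] N,
      (∀ i ∈ I₀, Submodule.map (g : N →ₗ[ℂ] N) (Submodule.map M.subtype (F i)) =
        Submodule.map M.subtype (F' i)) ∧
      (∀ i ∉ I₀, Submodule.map (g : N →ₗ[ℂ] N)
          (Submodule.map M.subtype (F i) ⊔ Submodule.span ℂ {e}) =
        Submodule.map M.subtype (F' i) ⊔ Submodule.span ℂ {e})) :
    ∃ h : ↥M ≃ₗ[ℂ] ↥M, ∀ i, Submodule.map (h : ↥M →ₗ[ℂ] ↥M) (F i) = F' i := by
  obtain ⟨g, hg₀, hg₁⟩ := hg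
  have he0 : e ≠ 0 := fun h => he (h ▸ M.zero_mem)
  have hc : IsCompl M (ℂ ∙ e) :=
    ⟨disjoint_span_singleton_of_notMem he, codisjoint_iff.mpr hspan⟩
  have hlift (i : I) : MapsLiftTo M e g (F i) (F' i) := by
    by_cases hi : i ∈ I₀
    exacts [.inl (hg₀ i hi), .inr (hg₁ i hi)]
  obtain ⟨g', hg'e, hg'⟩ := exists_mapsLiftTo_symm_apply_notMem he0 hc g
  obtain ⟨h, hh⟩ := exists_linearEquiv_map_eq hc hg'e
  exact ⟨h, fun i => hh _ _ (hg' _ _ (hlift i))⟩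
end

section
/- Let V be a countable-dimensional complex vector space, E a basis of V whose dual family spans V_* ⊂ V^*, and let F = {0 = F₀ ⊂ F₁ ⊂ ⋯ ⊂ F_m = V} be a chain of subspaces compatible with E (each F_k spanned by a subset of E) such that there is exactly one index k₀ with dim F_{k₀}/F_{k₀−1} = ∞ (so F_{k₀−1} is finite-dimensional and F_{k₀} is finite-codimensional, cut out by finitely many elements of V_*). Then for every basis E' of V whose dual family spans V_*, there exists a basis E'' differing from E' by only finitely many vectors such that every F_k is spanned by a subset of E''. -/
/-!
The finiteness hypotheses make `F k₀.castSucc` finite-dimensional and `F k₀.succ` of finite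
codimension. Being spanned by part of `E`, the subspace `F k₀.succ` is then cut out by finitely
many coordinate functionals of `E`. These lie in `V_*`, the span of the coordinate functionals
of `E'`, so each of them vanishes on all but finitely many vectors of `E'`. Hence there is a
finite set `S` of indices such that `U = span (E' '' S)` contains `F k₀.castSucc` and
`W = span (E' '' Sᶜ)` lies in `F k₀.succ`. Every `F k` then either lies in `U` or contains `W`,
and in the second case `F k = (F k ⊓ U) ⊔ W` by the modular law. So it suffices to replace
`E'` on `S` by a basis of `U` adapted to the chain `F k ⊓ U`.
-/

open Submodule Set

theorem Set.range_diff_range_subset_image {α β : Type*} {f g : α → β} {S : Set α}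
    (h : EqOn f g Sᶜ) : range f \ range g ⊆ f '' S := by
  rintro _ ⟨⟨i, rfl⟩, hi⟩
  by_contra hiS
  exact hi ⟨i, (h fun hS => hiS ⟨i, hS, rfl⟩).symm⟩

section Chain

variable {K V : Type*} [DivisionRing K] [AddCommGroup V] [Module K V]

theorem Submodule.finiteDimensional_of_le_of_quotient {p q : Submodule K V} (hpq : p ≤ q)
    [FiniteDimensional K p] [FiniteDimensional K (q ⧸ comap q.subtype p)] :
    FiniteDimensional K q :=
  haveI := (comapSubtypeEquivOfLe hpq).symm.finiteDimensional
  Module.Finite.of_submodule_quotient (comap q.subtype p)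

theorem Submodule.finiteDimensional_quotient_of_le {p q : Submodule K V} (hpq : p ≤ q)
    [FiniteDimensional K (V ⧸ q)] [FiniteDimensional K (q ⧸ comap q.subtype p)] :
    FiniteDimensional K (V ⧸ p) := by
  let f := p.mkQ ∘ₗ q.subtype
  have e : (q ⧸ comap q.subtype p) ≃ₗ[K] map p.mkQ q :=
    (quotEquivOfEq _ _ (by rw [LinearMap.ker_comp, ker_mkQ])).trans <|
      f.quotKerEquivRange.trans (LinearEquiv.ofEq _ _ (by rw [LinearMap.range_comp, range_subtype]))
  have := e.finiteDimensional
  have := (quotientQuotientEquivQuotient p q hpq).symm.finiteDimensional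
  exact Module.Finite.of_submodule_quotient (map p.mkQ q)

variable {m : ℕ} {F : Fin (m + 1) → Submodule K V}

theorem Monotone.finiteDimensional_of_steps (hF : Monotone F) (h0 : F 0 = ⊥) (k : Fin (m + 1))
    (hk : ∀ j : Fin m, j.succ ≤ k →
      FiniteDimensional K (↥(F j.succ) ⧸ comap (F j.succ).subtype (F j.castSucc))) :
    FiniteDimensional K (F k) := by
  induction k using Fin.induction with
  | zero => rw [h0]; infer_instance
  | succ j ih =>
    have := ih fun i hi => hk i (hi.trans (Fin.castSucc_le_succ j))
    have := hk j le_rfl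
    exact finiteDimensional_of_le_of_quotient (hF (Fin.castSucc_le_succ j))

theorem Monotone.finiteDimensional_quotient_of_steps (hF : Monotone F)
    (htop : F (Fin.last m) = ⊤) (k : Fin (m + 1))
    (hk : ∀ j : Fin m, k ≤ j.castSucc →
      FiniteDimensional K (↥(F j.succ) ⧸ comap (F j.succ).subtype (F j.castSucc))) :
    FiniteDimensional K (V ⧸ F k) := by
  induction k using Fin.reverseInduction with
  | last => rw [htop]; infer_instance
  | cast j ih =>
    have := ih fun i hi => hk i ((Fin.castSucc_le_succ j).trans hi)
    have := hk j le_rfl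
    exact finiteDimensional_quotient_of_le (hF (Fin.castSucc_le_succ j))

theorem exists_adapted_spanning_sets : ∀ {n : ℕ} (G : Fin (n + 1) → Submodule K V), Monotone G →
    ∃ s : Fin (n + 1) → Set V, Monotone s ∧ (∀ k, span K (s k) = G k) ∧
      LinearIndepOn K id (s (Fin.last n))
  | 0, G, _ => by
    obtain ⟨s, -, hspan, hli⟩ := exists_linearIndependent K (G 0 : Set V)
    refine ⟨fun _ => s, monotone_const, fun k => ?_, hli⟩
    rw [Fin.fin_one_eq_zero k, hspan, span_eq]
  | n + 1, G, hG => by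
    obtain ⟨s, hs, hspan, hli⟩ := exists_adapted_spanning_sets (G ∘ Fin.castSucc)
      (hG.comp Fin.strictMono_castSucc.monotone)
    have hsG : s (Fin.last n) ⊆ G (Fin.last (n + 1)) := by
      rw [← span_le, hspan]
      exact hG (Fin.le_last _)
    obtain ⟨t, htG, hst, hGt, hlit⟩ := exists_linearIndepOn_id_extension hli hsG
    refine ⟨Fin.snoc s t, Fin.monotone_iff_le_succ.2 fun k => ?_,
      Fin.lastCases ?_ (by simpa using hspan), by simpa using hlit⟩
    · induction k using Fin.lastCases with
      | last => simpa using hst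
      | cast j =>
        rw [Fin.succ_castSucc, Fin.snoc_castSucc, Fin.snoc_castSucc]
        exact hs (Fin.castSucc_le_succ j)
    · simpa using le_antisymm (span_le.2 htG) hGt

end Chain

namespace Module.Basis

section Ring

variable {ι R M : Type*} [Ring R] [AddCommGroup M] [Module R M] (b : Basis ι R M)

theorem mem_span_image_iff_coord {S : Set ι} {v : M} :
    v ∈ span R (b '' S) ↔ ∀ j ∉ S, b.coord j v = 0 := by
  rw [b.mem_span_image]
  exact Finsupp.support_subset_iff

theorem exists_finite_le_span_image {p : Submodule R M} (hp : p.FG) :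
    ∃ S : Set ι, S.Finite ∧ p ≤ span R (b '' S) := by
  obtain ⟨t, rfl⟩ := hp
  refine ⟨⋃ v ∈ t, ↑(b.repr v).support, t.finite_toSet.biUnion fun v _ => Finset.finite_toSet _,
    span_le.2 fun v hv => ?_⟩
  have hsupp : (↑(b.repr v).support : Set ι) ⊆ ⋃ v ∈ t, ↑(b.repr v).support :=
    subset_biUnion_of_mem (u := fun v : M => (↑(b.repr v).support : Set ι)) hv
  exact span_mono (image_mono hsupp) (b.mem_span_repr_support v)

theorem span_image_sup_span_image_compl (S : Set ι) :
    span R (b '' S) ⊔ span R (b '' Sᶜ) = ⊤ := by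
  rw [← span_union, ← image_union, union_compl_self, image_univ, b.span_eq]

theorem exists_eqOn_compl (S : Set ι) (c : Basis S R (span R (b '' S))) :
    ∃ b' : Basis ι R M, (∀ i : S, b' i = c i) ∧ EqOn b' b Sᶜ := by
  classical
  let e := (Equiv.sumCompl (· ∈ S)).symm
  let v : ι → M := Sum.elim ((span R (b '' S)).subtype ∘ c) (b ∘ (↑) : ↥Sᶜ → M) ∘ e
  have hU : span R (range ((span R (b '' S)).subtype ∘ c)) = span R (b '' S) := by
    rw [range_comp, span_image, c.span_eq, Submodule.map_top, range_subtype]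
  have hW : span R (range (b ∘ (↑) : ↥Sᶜ → M)) = span R (b '' Sᶜ) := by
    rw [range_comp, Subtype.range_coe]
  have hli : LinearIndependent R v := by
    refine (LinearIndependent.sum_type (c.linearIndependent.map' _ (ker_subtype _))
      (b.linearIndependent.comp _ Subtype.val_injective) ?_).comp _ e.injective
    rw [hU, hW]
    exact b.linearIndependent.disjoint_span_image disjoint_compl_right
  have hsp : ⊤ ≤ span R (range v) := by
    rw [range_comp, e.range_eq_univ, image_univ, Sum.elim_range, span_union, hU, hW,
      b.span_image_sup_span_image_compl]
  refine ⟨.mk hli hsp, fun i => ?_, fun i hi => ?_⟩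
  · simp [v, e, Equiv.sumCompl_symm_apply_of_pos i.2]
  · simp [v, e, Equiv.sumCompl_symm_apply_of_neg hi]

end Ring

section CommRing

variable {ι ι' R M : Type*} [CommRing R] [AddCommGroup M] [Module R M]

theorem finite_setOf_apply_ne_zero (b : Basis ι R M) {φ : Dual R M}
    (hφ : φ ∈ span R (range b.coord)) : {i | φ (b i) ≠ 0}.Finite := by
  obtain ⟨c, rfl⟩ := Finsupp.mem_span_range_iff_exists_finsupp.mp hφ
  refine c.support.finite_toSet.subset fun i hi => ?_
  classical
  simpa [Finsupp.sum, Finsupp.single_apply] using hi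

theorem finite_setOf_notMem_span_image (b : Basis ι R M) (b' : Basis ι' R M)
    (hbb' : span R (range b.coord) ≤ span R (range b'.coord)) {S : Set ι} (hS : Sᶜ.Finite) :
    {i | b' i ∉ span R (b '' S)}.Finite := by
  refine (hS.biUnion fun j _ => b'.finite_setOf_apply_ne_zero (hbb' (subset_span ⟨j, rfl⟩))).subset
    fun i hi => ?_
  simp only [mem_ofPred_eq, b.mem_span_image_iff_coord, not_forall] at hi
  obtain ⟨j, hj, hne⟩ := hi
  exact mem_biUnion hj hne

end CommRing

section DivisionRing

variable {ι K V : Type*} [DivisionRing K] [AddCommGroup V] [Module K V]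

theorem finite_compl_of_finiteDimensional_quotient (b : Basis ι K V) (S : Set ι)
    [FiniteDimensional K (V ⧸ span K (b '' S))] : Sᶜ.Finite := by
  have hli : LinearIndependent K ((span K (b '' S)).mkQ ∘ fun j : ↥Sᶜ => b j) := by
    refine (b.linearIndependent.comp _ Subtype.val_injective).map ?_
    rw [ker_mkQ, range_comp, Subtype.range_coe]
    exact b.linearIndependent.disjoint_span_image disjoint_compl_left
  exact finite_coe_iff.mp hli.finite_of_isNoetherian

theorem exists_adapted_to_chain {n : ℕ} (b : Basis ι K V) (G : Fin (n + 1) → Submodule K V) (hG : Monotone G) :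
    ∃ c : Basis ι K V, ∀ k, ∃ T : Set ι, G k = span K (c '' T) := by
  obtain ⟨s, hs, hspan, hli⟩ := exists_adapted_spanning_sets G hG
  obtain ⟨t, -, hst, htop, hlit⟩ := exists_linearIndepOn_id_extension hli (subset_univ _)
  let c₀ : Basis t K V := .mk hlit fun x _ => by simpa using htop (mem_univ x)
  have hc₀ : ⇑c₀ = (↑) := coe_mk _ _
  let e := c₀.indexEquiv b
  refine ⟨c₀.reindex e, fun k => ⟨e '' {x | ↑x ∈ s k}, ?_⟩⟩
  have hsk : s k ⊆ t := (hs (Fin.le_last k)).trans hst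
  rw [coe_reindex, image_comp, e.symm_image_image, hc₀, ← hspan k]
  congr 1
  exact (Subtype.image_preimage_coe t (s k)).trans (inter_eq_right.2 hsk) |>.symm

theorem exists_adapted_eqOn_compl {n : ℕ} (b : Basis ι K V) (S : Set ι) (F : Fin (n + 1) → Submodule K V)
    (hF : Monotone F) (hcut : ∀ k, F k ≤ span K (b '' S) ∨ span K (b '' Sᶜ) ≤ F k) :
    ∃ b' : Basis ι K V, EqOn b' b Sᶜ ∧ ∀ k, ∃ T : Set ι, F k = span K (b' '' T) := by
  set U := span K (b '' S)
  let bU : Basis S K U := (Basis.span (b.linearIndependent.comp _ Subtype.val_injective)).map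
    (LinearEquiv.ofEq _ _ (by rw [range_comp, Subtype.range_coe]))
  obtain ⟨c, hc⟩ := bU.exists_adapted_to_chain (fun k => comap U.subtype (F k))
    fun _ _ h => comap_mono (hF h)
  obtain ⟨b', hb'c, hb'b⟩ := b.exists_eqOn_compl S c
  have hinf : ∀ k, ∃ T : Set ι, F k ⊓ U = span K (b' '' T) := fun k => by
    obtain ⟨T, hT⟩ := hc k
    refine ⟨(↑) '' T, ?_⟩
    rw [inf_comm, ← map_comap_subtype, hT, map_span, image_image, image_image]
    simp only [subtype_apply, hb'c]
  refine ⟨b', hb'b, fun k => ?_⟩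
  obtain ⟨T, hT⟩ := hinf k
  rcases hcut k with hle | hge
  · exact ⟨T, by rw [← hT, inf_eq_left.2 hle]⟩
  · refine ⟨T ∪ Sᶜ, ?_⟩
    rw [image_union, span_union, ← hT, hb'b.image_eq, inf_sup_assoc_of_le _ hge,
      b.span_image_sup_span_image_compl, inf_top_eq]

end DivisionRing

end Module.Basis

theorem stmt16_general {ι ι' V : Type*} [AddCommGroup V] [Module ℂ V]
    (E : Module.Basis ι ℂ V) (Vs : Submodule ℂ (Module.Dual ℂ V))
    (hVs : Vs = Submodule.span ℂ (Set.range fun i => E.coord i))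
    {m : ℕ} (F : Fin (m + 1) → Submodule ℂ V) (hmono : Monotone F)
    (h0 : F 0 = ⊥) (htop : F (Fin.last m) = ⊤)
    (hcomp : ∀ k, ∃ S : Set ι, F k = Submodule.span ℂ (⇑E '' S))
    (k₀ : Fin m)
    (hfin : ∀ k : Fin m, k ≠ k₀ → FiniteDimensional ℂ
      (↥(F k.succ) ⧸ Submodule.comap (F k.succ).subtype (F k.castSucc)))
    (E' : Module.Basis ι' ℂ V)
    (hVs' : Vs = Submodule.span ℂ (Set.range fun i => E'.coord i)) :
    ∃ E'' : Module.Basis ι' ℂ V,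
      (Set.range ⇑E'' \ Set.range ⇑E').Finite ∧
      (Set.range ⇑E' \ Set.range ⇑E'').Finite ∧
      ∀ k, ∃ S : Set ι', F k = Submodule.span ℂ (⇑E'' '' S) := by
  have hlow : FiniteDimensional ℂ (F k₀.castSucc) := hmono.finiteDimensional_of_steps h0 _
    fun j hj => hfin j fun h => (Fin.castSucc_lt_succ (i := j)).not_ge (h ▸ hj)
  have hhigh : FiniteDimensional ℂ (V ⧸ F k₀.succ) := hmono.finiteDimensional_quotient_of_steps
    htop _ fun j hj => hfin j fun h => (Fin.castSucc_lt_succ (i := j)).not_ge (h ▸ hj)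
  obtain ⟨SB, hSB⟩ := hcomp k₀.succ
  rw [hSB] at hhigh
  have hout : {i | E' i ∉ F k₀.succ}.Finite := hSB ▸ E.finite_setOf_notMem_span_image E'
    (hVs.symm.trans hVs').le (E.finite_compl_of_finiteDimensional_quotient SB)
  obtain ⟨S₀, hS₀, hlowS₀⟩ := E'.exists_finite_le_span_image (Module.Finite.iff_fg.mp hlow)
  set S := S₀ ∪ {i | E' i ∉ F k₀.succ}
  have hcut : ∀ k, F k ≤ span ℂ (E' '' S) ∨ span ℂ (E' '' Sᶜ) ≤ F k := fun k => by
    rcases le_or_gt k k₀.castSucc with hk | hk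
    · exact .inl ((hmono hk).trans (hlowS₀.trans (span_mono (image_mono subset_union_left))))
    · refine .inr ((span_le.2 ?_).trans (hmono (Fin.castSucc_lt_iff_succ_le.1 hk)))
      rintro _ ⟨i, hi, rfl⟩
      by_contra h
      exact hi (.inr h)
  obtain ⟨E'', hE''E', hE''⟩ := E'.exists_adapted_eqOn_compl S F hmono hcut
  have hS : S.Finite := hS₀.union hout
  exact ⟨E'', (hS.image _).subset (range_diff_range_subset_image hE''E'),
    (hS.image _).subset (range_diff_range_subset_image hE''E'.symm), hE''⟩

/-- Let `E` be an admissible basis (dual family spanning `V_*`) of the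
countable-dimensional space `V`, and `F = {0 = F₀ ⊂ ⋯ ⊂ F_m = V}` an `E`-compatible chain
with exactly one infinite-dimensional quotient `F_{k₀}/F_{k₀−1}` (all other quotients
finite-dimensional).  Then for every admissible basis `E'` there is a basis `E''` differing
from `E'` by finitely many vectors such that every `F_k` is spanned by a subset of `E''`. -/
theorem stmt16 {ι ι' V : Type*} [Countable ι] [AddCommGroup V] [Module ℂ V]
    (E : Module.Basis ι ℂ V) (Vs : Submodule ℂ (Module.Dual ℂ V))
    (hVs : Vs = Submodule.span ℂ (Set.range fun i => E.coord i))
    {m : ℕ} (F : Fin (m + 1) → Submodule ℂ V) (hmono : Monotone F)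
    (h0 : F 0 = ⊥) (htop : F (Fin.last m) = ⊤)
    (hcomp : ∀ k, ∃ S : Set ι, F k = Submodule.span ℂ (⇑E '' S))
    (k₀ : Fin m)
    (hinf : ¬ FiniteDimensional ℂ
      (↥(F k₀.succ) ⧸ Submodule.comap (F k₀.succ).subtype (F k₀.castSucc)))
    (hfin : ∀ k : Fin m, k ≠ k₀ → FiniteDimensional ℂ
      (↥(F k.succ) ⧸ Submodule.comap (F k.succ).subtype (F k.castSucc)))
    (E' : Module.Basis ι' ℂ V)
    (hVs' : Vs = Submodule.span ℂ (Set.range fun i => E'.coord i)) :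
    ∃ E'' : Module.Basis ι' ℂ V,
      (Set.range ⇑E'' \ Set.range ⇑E').Finite ∧
      (Set.range ⇑E' \ Set.range ⇑E'').Finite ∧
      ∀ k, ∃ S : Set ι', F k = Submodule.span ℂ (⇑E'' '' S) :=
  stmt16_general E Vs hVs F hmono h0 htop hcomp k₀ hfin E' hVs'
end

section
/- Let V be countable-dimensional with admissible basis E and F a chain of subspaces of V compatible with E that contains a subspace F₀ which is both infinite-dimensional and infinite-codimensional. Then there exists a basis Ẽ of V, admissible (dual family spanning V_*), such that for every g ∈ GL(E) one has g H(Ẽ) g⁻¹ ⊄ Stab_{GL(E)}(F), where H(Ẽ) is the diagonal subgroup in basis Ẽ. In other words, the stabilizer of F fails to contain a conjugate of the splitting Cartan subgroup H(Ẽ). -/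
/-!
Pair infinitely many basis vectors `E (a k)` inside `F₀` with basis vectors `E (b k)` outside
it, and let `Ẽ` be `E` with each `E (a k)` replaced by `E (a k) + E (b k)`. The change of basis
is `1 + N` with `N² = 0`. Admissibility of a basis means that the functionals vanishing on almost
all of its vectors are exactly `V_*`, and since `N` sends `E (a k)` to `E (b k)` and kills the
other basis vectors, a functional vanishes on almost all of `Ẽ` iff it does on almost all of `E`.
An element `g` of `GL(E)` fixes `E (a k)` and `E (b k)` for some `k`; conjugated by `g`, the
reflection of `Ẽ` in `Ẽ (b k) = E (b k)` sends `E (a k) ∈ F₀` to `E (a k) + 2 E (b k) ∉ F₀`.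
So it cannot preserve the chain, since an involutive order automorphism fixes every element of
a chain that it preserves.
-/

open Function Set Submodule

theorem IsChain.apply_eq_of_involutive {α : Type*} [PartialOrder α] {C : Set α}
    (hC : IsChain (· ≤ ·) C) {σ : α → α} (hσ : Monotone σ) (hinv : Involutive σ) {x : α}
    (hx : x ∈ C) (hσx : σ x ∈ C) : σ x = x := by
  rcases hC.total hσx hx with h | h
  · have h' := hσ h
    rw [hinv x] at h'
    exact h.antisymm h'
  · have h' := hσ h
    rw [hinv x] at h'
    exact h'.antisymm h

theorem Set.Infinite.exists_injective_nat {α : Type*} {s : Set α} (hs : s.Infinite) :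
    ∃ f : ℕ → α, Injective f ∧ ∀ n, f n ∈ s :=
  ⟨_, Subtype.val_injective.comp (hs.natEmbedding s).injective, fun n => (hs.natEmbedding s n).2⟩

theorem Set.Finite.support_extend_comp {ι κ N : Type*} [Zero N] {a b : κ → ι} {u : ι → N}
    (hu : u.support.Finite) (hb : Injective b) : (extend a (u ∘ b) 0).support.Finite :=
  ((hu.preimage hb.injOn).image a).subset <|
    support_extend_zero_subset.trans (image_mono (support_comp_eq_preimage u b).subset)

theorem Submodule.map_involutive {R M : Type*} [Semiring R] [AddCommMonoid M] [Module R M]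
    {f : M →ₗ[R] M} (hf : Involutive f) : Involutive (map f) := fun W => by
  rw [← map_comp, show f ∘ₗ f = LinearMap.id from LinearMap.ext hf, map_id]

namespace Module.Basis

variable {ι κ R M : Type*} [CommRing R] [AddCommGroup M] [Module R M] (E : Basis ι R M)

theorem mem_span_range_coord_iff_s17 (f : Dual R M) :
    f ∈ span R (range E.coord) ↔ (fun i => f (E i)).support.Finite := by
  refine ⟨fun hf => ?_, fun hf => ?_⟩
  · induction hf using Submodule.span_induction with
    | mem _ h =>
      obtain ⟨j, rfl⟩ := h
      refine (finite_singleton j).subset fun i hi => ?_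
      by_contra hij
      exact hi (by simp [coord_apply, Finsupp.single_eq_of_ne' hij])
    | zero => simp
    | add f g _ _ hf hg => exact (hf.union hg).subset (support_add _ _)
    | smul c f _ hf => exact hf.subset (support_const_smul_subset c _)
  · have hsum : ∑ i ∈ hf.toFinset, f (E i) • E.coord i = f := by
      refine E.ext fun j => ?_
      simp only [LinearMap.coe_sum, Finset.sum_apply, LinearMap.smul_apply, coord_apply,
        repr_self, smul_eq_mul]
      rw [Finset.sum_eq_single j
        (fun i _ hij => by rw [Finsupp.single_eq_of_ne' hij.symm, mul_zero])
        (fun hj => by simp_all), Finsupp.single_eq_same, mul_one]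
    rw [← hsum]
    exact sum_mem fun i _ => smul_mem _ _ (subset_span ⟨i, rfl⟩)

theorem finite_quotient_span_image {S : Set ι} (hS : Sᶜ.Finite) :
    Module.Finite R (M ⧸ span R (E '' S)) := by
  refine ⟨⟨((hS.image E).image (mkQ _)).toFinset, ?_⟩⟩
  rw [Finite.coe_toFinset, span_image, map_mkQ_eq_top, ← span_union, ← image_union,
    union_compl_self, image_univ, E.span_eq]

theorem add_smul_notMem_span_image [Nontrivial R] {S : Set ι} {i j : ι} (hi : i ∈ S)
    (hj : j ∉ S) {c : R} (hc : c ≠ 0) : E i + c • E j ∉ span R (E '' S) := by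
  intro h
  have hcj : c • E j ∈ span R (E '' S) := by
    simpa using sub_mem h (subset_span (mem_image_of_mem E hi))
  rw [mem_span_image, map_smul, repr_self, Finsupp.smul_single, smul_eq_mul, mul_one,
    Finsupp.support_single _ hc, Finset.coe_singleton, singleton_subset_iff] at hcj
  exact hj hcj

noncomputable def diagonal (w : ι → Rˣ) : M ≃ₗ[R] M :=
  E.equiv (E.unitsSMul w) (Equiv.refl ι)

theorem diagonal_apply_self (w : ι → Rˣ) (i : ι) : E.diagonal w (E i) = (w i : R) • E i := by
  rw [diagonal, equiv_apply, Equiv.refl_apply, unitsSMul_apply, Units.smul_def]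

theorem diagonal_involutive {w : ι → Rˣ} (hw : w * w = 1) : Involutive (E.diagonal w) := by
  have : (E.diagonal w : M →ₗ[R] M) ∘ₗ E.diagonal w = LinearMap.id := E.ext fun i => by
    have hwi : w i * w i = 1 := congrFun hw i
    simp [diagonal_apply_self, smul_smul, ← Units.val_mul, hwi]
  exact LinearMap.congr_fun this

variable (a b : κ → ι)

noncomputable def pairShift : Module.End R M := E.constr R (Function.extend a (E ∘ b) 0)

theorem pairShift_basis (i : ι) : E.pairShift a b (E i) = Function.extend a (E ∘ b) 0 i :=
  E.constr_basis R _ i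

variable {a b}

theorem pairShift_mul_self (hab : ∀ k l, a k ≠ b l) : E.pairShift a b * E.pairShift a b = 0 := by
  classical
  refine E.ext fun i => ?_
  have hb : ∀ l, E.pairShift a b (E (b l)) = 0 := fun l => by
    rw [pairShift_basis, extend_apply' _ _ _ fun ⟨k, hk⟩ => hab k l hk, Pi.zero_apply]
  rw [Module.End.mul_apply, pairShift_basis, extend_def, LinearMap.zero_apply]
  split_ifs
  · exact hb _
  · exact map_zero _

theorem one_add_pairShift_mul_one_sub (hab : ∀ k l, a k ≠ b l) :
    (1 + E.pairShift a b) * (1 - E.pairShift a b) = 1 := by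
  rw [mul_sub, add_mul, add_mul, E.pairShift_mul_self hab]
  noncomm_ring

theorem one_sub_pairShift_mul_one_add (hab : ∀ k l, a k ≠ b l) :
    (1 - E.pairShift a b) * (1 + E.pairShift a b) = 1 := by
  rw [sub_mul, mul_add, mul_add, E.pairShift_mul_self hab]
  noncomm_ring

noncomputable def shear (hab : ∀ k l, a k ≠ b l) : Basis ι R M :=
  E.map (LinearEquiv.ofLinearMap (1 + E.pairShift a b) (1 - E.pairShift a b)
    (E.one_add_pairShift_mul_one_sub hab) (E.one_sub_pairShift_mul_one_add hab))

theorem shear_apply (hab : ∀ k l, a k ≠ b l) (i : ι) :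
    E.shear hab i = E i + Function.extend a (E ∘ b) 0 i := by
  simp [shear, pairShift_basis]

theorem shear_apply_left (ha : Function.Injective a) (hab : ∀ k l, a k ≠ b l) (k : κ) :
    E.shear hab (a k) = E (a k) + E (b k) := by
  rw [shear_apply, ha.extend_apply, comp_apply]

theorem shear_apply_right (hab : ∀ k l, a k ≠ b l) (l : κ) : E.shear hab (b l) = E (b l) := by
  rw [shear_apply, extend_apply' _ _ _ fun ⟨k, hk⟩ => hab k l hk, Pi.zero_apply, add_zero]

theorem span_range_coord_shear (hab : ∀ k l, a k ≠ b l) (hb : Function.Injective b) :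
    span R (range (E.shear hab).coord) = span R (range E.coord) := by
  ext f
  rw [mem_span_range_coord_iff_s17, mem_span_range_coord_iff_s17]
  set u : ι → R := fun i => f (E i)
  set u' : ι → R := fun i => f (E.shear hab i)
  have hu' : u' = u + Function.extend a (u ∘ b) 0 := by
    ext i
    have hf0 : (f ∘ 0 : ι → R) = 0 := funext fun _ => map_zero f
    simp only [u', u, shear_apply, map_add, apply_extend f, hf0]
    rfl
  have hb' : u' ∘ b = u ∘ b := by
    ext l; simp only [u', u, comp_apply, shear_apply_right]
  have hu : u = u' - Function.extend a (u' ∘ b) 0 := by rw [hb', hu', add_sub_cancel_right]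
  refine ⟨fun h => ?_, fun h => ?_⟩
  · rw [hu]; exact (h.union (h.support_extend_comp hb)).subset (support_sub _ _)
  · rw [hu']; exact (h.union (h.support_extend_comp hb)).subset (support_add _ _)

theorem shear_diagonal_apply_left [DecidableEq ι] (ha : Function.Injective a)
    (hab : ∀ k l, a k ≠ b l) (k : κ) :
    (E.shear hab).diagonal (Pi.mulSingle (b k) (-1)) (E (a k)) = E (a k) + (2 : R) • E (b k) := by
  have h : E (a k) = E.shear hab (a k) - E.shear hab (b k) := by
    rw [shear_apply_left E ha, shear_apply_right]; abel
  rw [h, map_sub, diagonal_apply_self, diagonal_apply_self, Pi.mulSingle_eq_same,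
    Pi.mulSingle_eq_of_ne (hab k k), shear_apply_left E ha, shear_apply_right]
  simp only [Units.val_one, Units.val_neg, one_smul, neg_smul]
  module

end Module.Basis

theorem stmt17_general {ι V : Type*} [AddCommGroup V] [Module ℂ V]
    (E : Module.Basis ι ℂ V) (Vs : Submodule ℂ (Module.Dual ℂ V))
    (hVs : Vs = Submodule.span ℂ (Set.range fun i => E.coord i))
    (C : Set (Submodule ℂ V)) (hchain : IsChain (· ≤ ·) C)
    (hcomp : ∀ W ∈ C, ∃ S : Set ι, W = Submodule.span ℂ (⇑E '' S))
    (F₀ : Submodule ℂ V) (hF₀ : F₀ ∈ C)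
    (hinfdim : ¬ FiniteDimensional ℂ ↥F₀)
    (hinfcodim : ¬ FiniteDimensional ℂ (V ⧸ F₀)) :
    ∃ Et : Module.Basis ι ℂ V, Vs = Submodule.span ℂ (Set.range fun i => Et.coord i) ∧
      ∀ g : V ≃ₗ[ℂ] V, {i | g (E i) ≠ E i}.Finite →
        ∃ h : V ≃ₗ[ℂ] V, (∀ j, ∃ c : ℂ, h (Et j) = c • Et j) ∧
          ¬ ((fun W => Submodule.map ((g.symm.trans (h.trans g)) : V →ₗ[ℂ] V) W) '' C = C) := by
  classical
  obtain ⟨S, rfl⟩ := hcomp F₀ hF₀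
  have hS : S.Infinite := fun h => hinfdim (FiniteDimensional.span_of_finite ℂ (h.image E))
  have hSc : Sᶜ.Infinite := fun h => hinfcodim (E.finite_quotient_span_image h)
  obtain ⟨a, ha, haS⟩ := hS.exists_injective_nat
  obtain ⟨b, hb, hbS⟩ := hSc.exists_injective_nat
  have hab : ∀ k l, a k ≠ b l := fun k l h => hbS l (h ▸ haS k)
  refine ⟨E.shear hab, by rw [hVs, E.span_range_coord_shear hab hb], fun g hg => ?_⟩
  have hfix : ∀ᶠ i in Filter.cofinite, g (E i) = E i := Filter.eventually_cofinite.2 hg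
  obtain ⟨k, hga, hgb⟩ :=
    ((ha.tendsto_cofinite.eventually hfix).and (hb.tendsto_cofinite.eventually hfix)).exists
  set D := (E.shear hab).diagonal (Pi.mulSingle (b k) (-1))
  refine ⟨D, fun j => ⟨_, Module.Basis.diagonal_apply_self _ _ j⟩, fun hC => ?_⟩
  set φ : V →ₗ[ℂ] V := ↑(g.symm.trans (D.trans g))
  have hD : Involutive D := (E.shear hab).diagonal_involutive
    (by rw [← Pi.mulSingle_mul, neg_one_mul, neg_neg, Pi.mulSingle_one])
  have hφ : Involutive φ := fun x => by simp [φ, hD _]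
  have hφS := hchain.apply_eq_of_involutive (fun _ _ => Submodule.map_mono)
    (Submodule.map_involutive hφ) hF₀ (hC ▸ mem_image_of_mem _ hF₀)
  have hφa : φ (E (a k)) = E (a k) + (2 : ℂ) • E (b k) := by
    simp only [φ, LinearEquiv.coe_coe, LinearEquiv.trans_apply]
    rw [g.symm_apply_eq.2 hga.symm, E.shear_diagonal_apply_left ha hab, map_add, map_smul, hga,
      hgb]
  exact E.add_smul_notMem_span_image (haS k) (hbS k) two_ne_zero
    (hφa ▸ hφS ▸ mem_map_of_mem (subset_span (mem_image_of_mem E (haS k))))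

/-- Let `E` be an admissible basis of the countable-dimensional space `V`
(dual family spanning `V_*`), and let `𝒞` be a chain of subspaces of `V`, each spanned by a
subset of `E`, containing a subspace `F₀` which is both infinite-dimensional and
infinite-codimensional.  Then there is an admissible basis `Ẽ` of `V` such that for every
`g ∈ GL(E)` the conjugate `g H(Ẽ) g⁻¹` of the diagonal subgroup `H(Ẽ)` is not contained in
the stabilizer of the chain `𝒞`. -/
theorem stmt17 {ι V : Type*} [Countable ι] [AddCommGroup V] [Module ℂ V]
    (E : Module.Basis ι ℂ V) (Vs : Submodule ℂ (Module.Dual ℂ V))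
    (hVs : Vs = Submodule.span ℂ (Set.range fun i => E.coord i))
    (C : Set (Submodule ℂ V)) (hchain : IsChain (· ≤ ·) C)
    (hcomp : ∀ W ∈ C, ∃ S : Set ι, W = Submodule.span ℂ (⇑E '' S))
    (F₀ : Submodule ℂ V) (hF₀ : F₀ ∈ C)
    (hinfdim : ¬ FiniteDimensional ℂ ↥F₀)
    (hinfcodim : ¬ FiniteDimensional ℂ (V ⧸ F₀)) :
    ∃ Et : Module.Basis ι ℂ V, Vs = Submodule.span ℂ (Set.range fun i => Et.coord i) ∧
      ∀ g : V ≃ₗ[ℂ] V, {i | g (E i) ≠ E i}.Finite →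
        ∃ h : V ≃ₗ[ℂ] V, (∀ j, ∃ c : ℂ, h (Et j) = c • Et j) ∧
          ¬ ((fun W => Submodule.map ((g.symm.trans (h.trans g)) : V →ₗ[ℂ] V) W) '' C = C) :=
  stmt17_general E Vs hVs C hchain hcomp F₀ hF₀ hinfdim hinfcodim
end
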